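/- arXiv:2605.05233 — 9 statements merged into one kernel-verified Lean document; each statement's English description precedes it below -/
import Mathlib

section
/- Let n ≥ 1, let u_1, …, u_n be nonnegative integers and let t be a nonnegative integer satisfying Σ_{j=1}^n u_j + n(n+1) = n·t. Consider the BMKP instance with n knapsacks, where knapsack j has capacity B_j = t − u_j, and with 2n items, namely exactly two items of weight i for each i ∈ {1, …, n}, every item having profit 1 (the items may be modeled as pairs (i, b) with i ∈ {1,…,n} and b ∈ {1,2}, the pair (i,b) having weight i and profit 1). Then the following are equivalent: (a) there exist permutations v and w of {1, …, n} such that u_j + v(j) + w(j) = t for every j ∈ {1, …, n}; (b) there exist pairwise disjoint sets I_1, …, I_n of items such that for every j the total weight of the items in I_j is at most t − u_j and |I_j| ≥ 2 (equivalently, since all profits are 1, the solution has objective value at least 2). -/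
/-!
A solution `(v, w)` of the matching problem puts the items `(v j, 0)` and `(w j, 1)` into
knapsack `j`, filling it exactly. Conversely, `2n` items in `n` disjoint knapsacks of at least two
items each means that every knapsack holds exactly two items and every item is used; since the total
weight `n (n + 1)` equals the total capacity, every knapsack is then full. Recording, for every
knapsack, the weights of its two items gives a `2`-regular bipartite multigraph between knapsacks and
weights; by Hall's theorem it has a perfect matching `v`, and the remaining edges form a second perfect
matching `w`, because the two items of a given weight cannot both avoid the knapsack `v⁻¹` assigns to
that weight.
-/

open Finset Function

theorem Prod.eq_or_eq_of_fst_eq_of_fst_eq {α : Type*} {p q r : α × Fin 2} (hq : q.1 = p.1)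
    (hr : r.1 = p.1) (hpq : p ≠ q) : r = p ∨ r = q := by
  obtain ⟨a, b⟩ := p
  obtain ⟨c, d⟩ := q
  obtain ⟨e, f⟩ := r
  dsimp only at hq hr
  subst hq hr
  simp only [ne_eq, Prod.mk.injEq, true_and] at hpq ⊢
  omega

theorem Finset.sum_comp_fst_of_map_fst_eq_pair {α β M : Type*} [AddCommMonoid M]
    {s : Finset (α × β)} {a b : α} (h : s.val.map Prod.fst = {a, b}) (f : α → M) :
    ∑ x ∈ s, f x.1 = f a + f b := by
  change (s.val.map (f ∘ Prod.fst)).sum = _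
  rw [← Multiset.map_map, h]
  simp

theorem Fin.two_mul_sum_val_add_one (n : ℕ) :
    2 * ∑ i : Fin n, (((i : ℕ) : ℤ) + 1) = n * (n + 1) := by
  rw [Fin.sum_univ_eq_sum_range (fun i => (i : ℤ) + 1)]
  induction n with
  | zero => simp
  | succ k ih => rw [sum_range_succ, mul_add, ih]; push_cast; ring

theorem card_eq_and_biUnion_eq_univ_of_pairwise_disjoint {ι α : Type*} [Fintype ι] [Fintype α]
    [DecidableEq α] {I : ι → Finset α} (hdisj : Pairwise (Disjoint on I)) {k : ℕ}
    (hk : ∀ j, k ≤ #(I j)) (hα : Fintype.card α ≤ Fintype.card ι * k) :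
    (∀ j, #(I j) = k) ∧ univ.biUnion I = univ := by
  have hsum : ∑ j, #(I j) = #(univ.biUnion I) := (card_biUnion (hdisj.set_pairwise _)).symm
  have hlower : ∑ _j : ι, k ≤ ∑ j, #(I j) := sum_le_sum fun j _ => hk j
  have hupper := card_le_univ (univ.biUnion I)
  rw [sum_const, card_univ, smul_eq_mul] at hlower
  refine ⟨fun j => ?_, eq_univ_of_card _ (by omega)⟩
  refine ((sum_eq_sum_iff_of_le fun j _ => hk j).mp ?_ j (mem_univ j)).symm
  rw [sum_const, card_univ, smul_eq_mul]
  omega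

theorem all_card_le_card_biUnion_image_fst {ι α : Type*} [DecidableEq α]
    {I : ι → Finset (α × Fin 2)} (hdisj : Pairwise (Disjoint on I)) (hcard : ∀ j, #(I j) = 2)
    (S : Finset ι) : #S ≤ #(S.biUnion fun j => (I j).image Prod.fst) := by
  have hsub : S.biUnion I ⊆ (S.biUnion fun j => (I j).image Prod.fst) ×ˢ univ := fun x hx => by
    obtain ⟨j, hj, hx⟩ := mem_biUnion.mp hx
    exact mem_product.mpr ⟨mem_biUnion.mpr ⟨j, hj, mem_image_of_mem _ hx⟩, mem_univ _⟩
  have := card_le_card hsub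
  rw [card_biUnion (hdisj.set_pairwise _), card_product, sum_congr rfl fun j _ => hcard j,
    sum_const, card_univ, Fintype.card_fin, smul_eq_mul] at this
  omega

-- The `2`-regular bipartite multigraph joining `j` to the first coordinates of `I j` is the union
-- of two perfect matchings.
theorem exists_perm_map_fst_eq_pair {ι : Type*} [Fintype ι] [DecidableEq ι]
    {I : ι → Finset (ι × Fin 2)} (hdisj : Pairwise (Disjoint on I)) (hcard : ∀ j, #(I j) = 2) :
    ∃ v w : Equiv.Perm ι, ∀ j, (I j).val.map Prod.fst = {v j, w j} := by
  have hunique {a : ι × Fin 2} {j j' : ι} (h : a ∈ I j) (h' : a ∈ I j') : j = j' :=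
    Set.PairwiseDisjoint.elim_finset (hdisj.set_pairwise Set.univ) (Set.mem_univ j)
      (Set.mem_univ j') a h h'
  obtain ⟨v, hv_inj, hv⟩ := (all_card_le_biUnion_card_iff_existsInjective' _).mp
    (all_card_le_card_biUnion_image_fst hdisj hcard)
  choose x hxI hxv using fun j => mem_image.mp (hv j)
  have hrest (j : ι) : ∃ y, (I j).erase (x j) = {y} := by
    rw [← card_eq_one, card_erase_of_mem (hxI j), hcard j]
  choose y hy using hrest
  have hyI (j : ι) : y j ∈ (I j).erase (x j) := hy j ▸ mem_singleton_self _
  have hI (j : ι) : I j = {x j, y j} := by rw [← hy j, insert_erase (hxI j)]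
  have hw_inj : Injective fun j => (y j).1 := by
    intro j j' hjj'
    by_contra hne
    obtain ⟨k, hk⟩ := Finite.injective_iff_surjective.mp hv_inj (y j).1
    have hyy : y j ≠ y j' := fun h =>
      hne (hunique (mem_of_mem_erase (hyI j)) (h ▸ mem_of_mem_erase (hyI j')))
    rcases Prod.eq_or_eq_of_fst_eq_of_fst_eq hjj'.symm ((hxv k).trans hk) hyy with h | h
    · have hk : k = j := hunique (hxI k) (h ▸ mem_of_mem_erase (hyI j))
      exact ne_of_mem_erase (hyI j) (hk ▸ h).symm
    · have hk : k = j' := hunique (hxI k) (h ▸ mem_of_mem_erase (hyI j'))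
      exact ne_of_mem_erase (hyI j') (hk ▸ h).symm
  refine ⟨Equiv.ofBijective v (Finite.injective_iff_bijective.mp hv_inj),
    Equiv.ofBijective _ (Finite.injective_iff_bijective.mp hw_inj), fun j => ?_⟩
  rw [hI j, insert_val_of_notMem (by simpa using (ne_of_mem_erase (hyI j)).symm)]
  simp [hxv]

theorem pairwise_disjoint_pair_of_perm {ι : Type*} [DecidableEq ι] (v w : Equiv.Perm ι) :
    Pairwise (Disjoint on fun j => ({(v j, 0), (w j, 1)} : Finset (ι × Fin 2))) := by
  intro j j' hne
  simp [onFun, v.injective.eq_iff, w.injective.eq_iff, Ne.symm hne]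

theorem stmt0_general (n : ℕ) (u : Fin n → ℕ) (t : ℕ)
    (hsum : (∑ j, u j) + n * (n + 1) = n * t) :
    (∃ v w : Equiv.Perm (Fin n),
        ∀ j : Fin n, u j + ((v j : ℕ) + 1) + ((w j : ℕ) + 1) = t) ↔
    (∃ I : Fin n → Finset (Fin n × Fin 2),
        (∀ j j' : Fin n, j ≠ j' → Disjoint (I j) (I j')) ∧
        (∀ j : Fin n, (∑ x ∈ I j, (((x.1 : ℕ) : ℤ) + 1)) ≤ (t : ℤ) - (u j : ℤ)) ∧
        (∀ j : Fin n, 2 ≤ (I j).card)) := by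
  constructor
  · rintro ⟨v, w, h⟩
    have hne (j : Fin n) : ((v j, 0) : Fin n × Fin 2) ≠ (w j, 1) := by simp
    refine ⟨_, fun j j' h => pairwise_disjoint_pair_of_perm v w h, fun j => ?_,
      fun j => (card_pair (hne j)).ge⟩
    rw [sum_pair (hne j)]
    have := h j
    push_cast
    omega
  · rintro ⟨I, hdisj, hweight, hcard⟩
    replace hdisj : Pairwise (Disjoint on I) := hdisj
    obtain ⟨hcard2, hcover⟩ :=
      card_eq_and_biUnion_eq_univ_of_pairwise_disjoint hdisj hcard (by simp)
    have htotal : ∑ j, ∑ x ∈ I j, (((x.1 : ℕ) : ℤ) + 1) = ∑ j, ((t : ℤ) - u j) := by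
      rw [← sum_biUnion (hdisj.set_pairwise _), hcover, Fintype.sum_prod_type]
      have := Fin.two_mul_sum_val_add_one n
      simp only [sum_const, card_univ, Fintype.card_fin, nsmul_eq_mul, ← mul_sum,
        sum_sub_distrib]
      push_cast
      zify at hsum
      linear_combination this + hsum
    obtain ⟨v, w, hvw⟩ := exists_perm_map_fst_eq_pair hdisj hcard2
    refine ⟨v, w, fun j => ?_⟩
    have hfull := (sum_eq_sum_iff_of_le fun j _ => hweight j).mp htotal j (mem_univ j)
    rw [sum_comp_fst_of_map_fst_eq_pair (hvw j) fun i => ((i : ℕ) : ℤ) + 1] at hfull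
    omega

/-- The reduction from RN3DM to BMKP: the RN3DM instance `(u, t)` has a solution
iff the BMKP instance with `n` knapsacks of capacities `t - u j` and two items of
weight `i` for each `i ∈ {1,…,n}` (all of profit 1) admits a feasible solution
of objective value at least 2 (i.e. each knapsack receives at least two items). -/
theorem stmt0 (n : ℕ) (hn : 1 ≤ n) (u : Fin n → ℕ) (t : ℕ)
    (hsum : (∑ j, u j) + n * (n + 1) = n * t) :
    (∃ v w : Equiv.Perm (Fin n),
        ∀ j : Fin n, u j + ((v j : ℕ) + 1) + ((w j : ℕ) + 1) = t) ↔
    (∃ I : Fin n → Finset (Fin n × Fin 2),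
        (∀ j j' : Fin n, j ≠ j' → Disjoint (I j) (I j')) ∧
        (∀ j : Fin n, (∑ x ∈ I j, (((x.1 : ℕ) : ℤ) + 1)) ≤ (t : ℤ) - (u j : ℤ)) ∧
        (∀ j : Fin n, 2 ≤ (I j).card)) :=
  stmt0_general n u t hsum
end

section
/- Let 0 < ε < 1/6, let X be a finite set of items where each item i has profit p(i) ≥ 0 and weight w(i) > 0, and let h ∈ X. Assume: (1) w(X) ≤ 1 and w(h) ≥ 1 − ε²; (2) p(X) ≥ 1 and p(X \ {h}) < 1; (3) 1/3 + ε < p(h) ≤ 2/3 − 6ε; (4) p(h) + p(i) < 2/3 − ε for every i ∈ X \ {h}. Then there exists a subset Y ⊆ X \ {h} such that ε ≤ p(Y) ≤ 1/3 and ε·(w(X) − w(h)) ≤ w(Y) ≤ ε². Here p(S) and w(S) denote the total profit and total weight of a set S of items. -/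
/-!
Compare subsets of `L = X \ {h}` by their density `w(Y) / p(Y)`. Every item of `L` has profit
below `1/3 - 2ε`, so as long as the profit exceeds `1/3 - ε` one can discard an item of least
density: the profit stays at least `ε` and the density does not drop. The surviving set `Y`
therefore has `w(Y) ≥ p(Y) · w(L) / p(L) ≥ ε · w(L)` because `p(L) < 1`, while
`w(Y) ≤ w(L) = w(X) - w(h) ≤ ε²`.
-/

namespace Finset

variable {ι 𝕜 : Type*} [Field 𝕜] [LinearOrder 𝕜] [IsStrictOrderedRing 𝕜]

theorem exists_mem_mul_sum_le_mul_sum {s : Finset ι} (hs : s.Nonempty) (p w : ι → 𝕜) :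
    ∃ i ∈ s, w i * ∑ j ∈ s, p j ≤ p i * ∑ j ∈ s, w j :=
  exists_le_of_sum_le hs <| by rw [← sum_mul, ← sum_mul, mul_comm]

variable [DecidableEq ι]

theorem exists_subset_sum_mem_Icc_mul_sum_le {a c : 𝕜} (p w : ι → 𝕜) (ha : 0 < a)
    (s : Finset ι) (hpc : ∀ i ∈ s, p i ≤ c) (has : a ≤ ∑ i ∈ s, p i) :
    ∃ t ⊆ s, ∑ i ∈ t, p i ∈ Set.Icc a (a + c) ∧
      (∑ i ∈ t, p i) * ∑ i ∈ s, w i ≤ (∑ i ∈ s, p i) * ∑ i ∈ t, w i := by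
  induction s using strongInduction with
  | H s ih =>
  by_cases hsmall : ∑ i ∈ s, p i ≤ a + c
  · exact ⟨s, subset_rfl, ⟨has, hsmall⟩, le_rfl⟩
  have hs : s.Nonempty := nonempty_of_sum_ne_zero (f := p) (by linarith)
  obtain ⟨i, hi, hi_sparsest⟩ := exists_mem_mul_sum_le_mul_sum hs p w
  set P := ∑ j ∈ s, p j
  set W := ∑ j ∈ s, w j
  have hP' : ∑ j ∈ s.erase i, p j = P - p i := sum_erase_eq_sub hi
  have hW' : ∑ j ∈ s.erase i, w j = W - w i := sum_erase_eq_sub hi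
  have hpi := hpc i hi
  obtain ⟨t, hts, ⟨hat, htc⟩, hdense⟩ := ih (s.erase i) (erase_ssubset hi)
    (fun j hj => hpc j (mem_of_mem_erase hj)) (by rw [hP']; linarith)
  refine ⟨t, hts.trans (erase_subset i s), ⟨hat, htc⟩, ?_⟩
  rw [hP', hW'] at hdense
  have hP'pos : 0 < P - p i := by linarith
  have hdensity_mono : W * (P - p i) ≤ P * (W - w i) := by linarith
  refine le_of_mul_le_mul_right ?_ hP'pos
  calc (∑ j ∈ t, p j) * W * (P - p i)
      = (∑ j ∈ t, p j) * (W * (P - p i)) := by ring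
    _ ≤ (∑ j ∈ t, p j) * (P * (W - w i)) :=
        mul_le_mul_of_nonneg_left hdensity_mono (by linarith)
    _ = P * ((∑ j ∈ t, p j) * (W - w i)) := by ring
    _ ≤ P * ((P - p i) * ∑ j ∈ t, w j) := mul_le_mul_of_nonneg_left hdense (by linarith)
    _ = P * (∑ j ∈ t, w j) * (P - p i) := by ring

end Finset

theorem stmt3_general {ι : Type*} [DecidableEq ι] (ε : ℝ) (hε : 0 < ε)
    (X : Finset ι) (p w : ι → ℝ) (h : ι) (hhX : h ∈ X)
    (hw0 : ∀ i ∈ X, 0 < w i)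
    (hwX : ∑ i ∈ X, w i ≤ 1) (hwh : 1 - ε ^ 2 ≤ w h)
    (hpX : 1 ≤ ∑ i ∈ X, p i) (hpX' : ∑ i ∈ X.erase h, p i < 1)
    (hph1 : 1/3 + ε < p h) (hph2 : p h ≤ 2/3 - 6 * ε)
    (hpair : ∀ i ∈ X.erase h, p h + p i < 2/3 - ε) :
    ∃ Y ⊆ X.erase h,
      ε ≤ ∑ i ∈ Y, p i ∧ (∑ i ∈ Y, p i) ≤ 1/3 ∧
      ε * ((∑ i ∈ X, w i) - w h) ≤ ∑ i ∈ Y, w i ∧ (∑ i ∈ Y, w i) ≤ ε ^ 2 := by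
  have hpL : ∑ i ∈ X.erase h, p i = (∑ i ∈ X, p i) - p h := Finset.sum_erase_eq_sub hhX
  have hwL : ∑ i ∈ X.erase h, w i = (∑ i ∈ X, w i) - w h := Finset.sum_erase_eq_sub hhX
  have hw0L : ∀ i ∈ X.erase h, 0 ≤ w i := fun i hi => (hw0 i (Finset.mem_of_mem_erase hi)).le
  obtain ⟨Y, hYL, ⟨hpY, hpY'⟩, hdense⟩ :=
    Finset.exists_subset_sum_mem_Icc_mul_sum_le (c := 1/3 - 2 * ε) p w hε (X.erase h)
      (fun i hi => by linarith [hpair i hi]) (by rw [hpL]; linarith)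
  have hwY : 0 ≤ ∑ i ∈ Y, w i := Finset.sum_nonneg fun i hi => hw0L i (hYL hi)
  have hwYL : ∑ i ∈ Y, w i ≤ ∑ i ∈ X.erase h, w i :=
    Finset.sum_le_sum_of_subset_of_nonneg hYL fun i hi _ => hw0L i hi
  refine ⟨Y, hYL, hpY, by linarith, ?_, by linarith⟩
  rw [← hwL]
  calc ε * ∑ i ∈ X.erase h, w i
      ≤ (∑ i ∈ Y, p i) * ∑ i ∈ X.erase h, w i := by
        gcongr; exact Finset.sum_nonneg hw0L
    _ ≤ (∑ i ∈ X.erase h, p i) * ∑ i ∈ Y, w i := hdense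
    _ ≤ ∑ i ∈ Y, w i := mul_le_of_le_one_left hwY hpX'.le

/-- Claim 9 (Clm:RemovedSets): from a knapsack `X` of weight at most 1 containing a
heavy item `h` of large profit, one can remove a set `Y ⊆ X \ {h}` of light items
whose profit is between `ε` and `1/3` and whose weight is between
`ε·(w(X) − w(h))` and `ε²`. -/
theorem stmt3 {ι : Type*} [DecidableEq ι] (ε : ℝ) (hε : 0 < ε) (hε' : ε < 1/6)
    (X : Finset ι) (p w : ι → ℝ) (h : ι) (hhX : h ∈ X)
    (hp0 : ∀ i ∈ X, 0 ≤ p i) (hw0 : ∀ i ∈ X, 0 < w i)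
    (hwX : ∑ i ∈ X, w i ≤ 1) (hwh : 1 - ε ^ 2 ≤ w h)
    (hpX : 1 ≤ ∑ i ∈ X, p i) (hpX' : ∑ i ∈ X.erase h, p i < 1)
    (hph1 : 1/3 + ε < p h) (hph2 : p h ≤ 2/3 - 6 * ε)
    (hpair : ∀ i ∈ X.erase h, p h + p i < 2/3 - ε) :
    ∃ Y ⊆ X.erase h,
      ε ≤ ∑ i ∈ Y, p i ∧ (∑ i ∈ Y, p i) ≤ 1/3 ∧
      ε * ((∑ i ∈ X, w i) - w h) ≤ ∑ i ∈ Y, w i ∧ (∑ i ∈ Y, w i) ≤ ε ^ 2 :=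
  stmt3_general ε hε X p w h hhX hw0 hwX hwh hpX hpX' hph1 hph2 hpair
end

section
/- Let 0 < ε < 1/7 and let D be a finite set of items where each item i has profit π(i) ≥ 0 and weight ω(i) > 0. Assume π(D) ≥ 1 − ε and π(i) < 1/2 − (7/2)·ε for every i ∈ D. Then there exists a subset Y ⊆ D such that 3ε·π(D) ≤ π(Y) < (1/2)·π(D) and ω(Y) ≥ 3ε·ω(D). Here π(S) and ω(S) denote the total profit and total weight of a set S of items. -/
/-!
Take a set `Y` of items of smallest profit-to-weight density, minimal (by cardinality) with
profit at least `3ε π(D)`. Removing its densest item drops the profit below `3ε π(D)`, and that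
item has profit below `1/2 − (7/2)ε ≤ (1/2 − 3ε) π(D)`, so `π(Y) < π(D)/2`. Because `Y` consists
of the least dense items, its weight share is at least its profit share: `π(Y) ω(D) ≤ π(D) ω(Y)`.
-/

open Finset

section DensityPrefix

variable {ι : Type*}

/-- `Y` is an initial segment of `D` in increasing order of density `π / ω`, written without
division. -/
def IsDensityPrefix (π ω : ι → ℝ) (D Y : Finset ι) : Prop :=
  ∀ a ∈ Y, ∀ b ∈ D, b ∉ Y → π a * ω b ≤ π b * ω a

namespace IsDensityPrefix

variable {π ω : ι → ℝ} {D Y : Finset ι}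

lemma self : IsDensityPrefix π ω D D := fun _ _ _ hb hbD => absurd hb hbD

lemma erase [DecidableEq ι] (hY : IsDensityPrefix π ω D Y) {i : ι} (hi : i ∈ Y)
    (hmax : ∀ a ∈ Y, π a * ω i ≤ π i * ω a) : IsDensityPrefix π ω D (Y.erase i) := by
  intro a ha b hbD hbY
  have haY : a ∈ Y := mem_of_mem_erase ha
  by_cases hbi : b = i
  · subst hbi
    exact hmax a haY
  · exact hY a haY b hbD fun hb => hbY (mem_erase.mpr ⟨hbi, hb⟩)

lemma sum_mul_sum_le (hY : IsDensityPrefix π ω D Y) (hYD : Y ⊆ D) :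
    (∑ i ∈ Y, π i) * ∑ i ∈ D, ω i ≤ (∑ i ∈ D, π i) * ∑ i ∈ Y, ω i := by
  classical
  have hcross : (∑ a ∈ Y, π a) * ∑ b ∈ D \ Y, ω b ≤ (∑ b ∈ D \ Y, π b) * ∑ a ∈ Y, ω a := by
    rw [sum_mul_sum, sum_mul_sum, sum_comm (s := D \ Y)]
    refine sum_le_sum fun a ha => sum_le_sum fun b hb => ?_
    exact hY a ha b (mem_sdiff.mp hb).1 (mem_sdiff.mp hb).2
  rw [← sum_sdiff hYD (f := π), ← sum_sdiff hYD (f := ω)]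
  linarith

lemma mul_sum_le_sum_of_mul_sum_le (hY : IsDensityPrefix π ω D Y) (hYD : Y ⊆ D)
    (hπ : 0 < ∑ i ∈ D, π i) (hω : 0 ≤ ∑ i ∈ D, ω i) {c : ℝ}
    (hc : c * ∑ i ∈ D, π i ≤ ∑ i ∈ Y, π i) : c * ∑ i ∈ D, ω i ≤ ∑ i ∈ Y, ω i := by
  refine le_of_mul_le_mul_left ?_ hπ
  calc (∑ i ∈ D, π i) * (c * ∑ i ∈ D, ω i)
      = c * (∑ i ∈ D, π i) * ∑ i ∈ D, ω i := by ring
    _ ≤ (∑ i ∈ Y, π i) * ∑ i ∈ D, ω i := mul_le_mul_of_nonneg_right hc hω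
    _ ≤ (∑ i ∈ D, π i) * ∑ i ∈ Y, ω i := hY.sum_mul_sum_le hYD

end IsDensityPrefix

lemma exists_densityPrefix_threshold {π ω : ι → ℝ} {D : Finset ι}
    (hω : ∀ i ∈ D, 0 < ω i) {t : ℝ} (ht : 0 < t) (htD : t ≤ ∑ i ∈ D, π i) :
    ∃ Y ⊆ D, IsDensityPrefix π ω D Y ∧ t ≤ ∑ i ∈ Y, π i ∧
      ∃ i ∈ Y, ∑ j ∈ Y, π j < t + π i := by
  classical
  set T := D.powerset.filter fun Y => IsDensityPrefix π ω D Y ∧ t ≤ ∑ i ∈ Y, π i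
  have hDT : D ∈ T := mem_filter.mpr ⟨mem_powerset_self D, .self, htD⟩
  obtain ⟨Y, hYT, hmin⟩ := T.exists_min_image card ⟨D, hDT⟩
  obtain ⟨hYD, hY, htY⟩ := by simpa only [T, mem_filter, mem_powerset] using hYT
  have hYne : Y.Nonempty := nonempty_of_sum_ne_zero (f := π) (by linarith)
  obtain ⟨i, hiY, hi⟩ := Y.exists_max_image (fun a => π a / ω a) hYne
  have hmax : ∀ a ∈ Y, π a * ω i ≤ π i * ω a := fun a ha =>
    (div_le_div_iff₀ (hω a (hYD ha)) (hω i (hYD hiY))).mp (hi a ha)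
  refine ⟨Y, hYD, hY, htY, i, hiY, ?_⟩
  rw [← sum_erase_add Y π hiY, add_lt_add_iff_right]
  by_contra! htle
  have hmem : Y.erase i ∈ T := mem_filter.mpr
    ⟨mem_powerset.mpr ((erase_subset i Y).trans hYD), hY.erase hiY hmax, htle⟩
  exact absurd (hmin _ hmem) (not_le.mpr (card_erase_lt_of_mem hiY))

end DensityPrefix

theorem stmt4_general {ι : Type*} (ε : ℝ) (hε : 0 < ε) (hε' : ε < 1/7)
    (D : Finset ι) (π ω : ι → ℝ)
    (hw0 : ∀ i ∈ D, 0 < ω i)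
    (hprof : 1 - ε ≤ ∑ i ∈ D, π i)
    (hsmall : ∀ i ∈ D, π i < 1/2 - (7/2) * ε) :
    ∃ Y ⊆ D,
      3 * ε * (∑ i ∈ D, π i) ≤ ∑ i ∈ Y, π i ∧
      (∑ i ∈ Y, π i) < (1/2) * ∑ i ∈ D, π i ∧
      3 * ε * (∑ i ∈ D, ω i) ≤ ∑ i ∈ Y, ω i := by
  have hP : 0 < ∑ i ∈ D, π i := by linarith
  obtain ⟨Y, hYD, hY, hlow, i, hiY, hhigh⟩ :=
    exists_densityPrefix_threshold (π := π) hw0 (t := 3 * ε * ∑ i ∈ D, π i) (by positivity)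
      (by nlinarith)
  have hi := hsmall i (hYD hiY)
  have hW : 0 ≤ ∑ i ∈ D, ω i := sum_nonneg fun i hi => (hw0 i hi).le
  refine ⟨Y, hYD, hlow, ?_, hY.mul_sum_le_sum_of_mul_sum_le hYD hP hW hlow⟩
  nlinarith

/-- Claim 14 (clm:removed-set-2): from any collection `D` of items of total profit
at least `1 − ε`, every item having profit below `1/2 − (7/2)ε`, one can extract a
subset `Y` whose profit is at least a `3ε`-fraction but strictly less than half of
the total profit, and whose weight is at least a `3ε`-fraction of the total weight. -/
theorem stmt4 {ι : Type*} (ε : ℝ) (hε : 0 < ε) (hε' : ε < 1/7)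
    (D : Finset ι) (π ω : ι → ℝ)
    (hp0 : ∀ i ∈ D, 0 ≤ π i) (hw0 : ∀ i ∈ D, 0 < ω i)
    (hprof : 1 - ε ≤ ∑ i ∈ D, π i)
    (hsmall : ∀ i ∈ D, π i < 1/2 - (7/2) * ε) :
    ∃ Y ⊆ D,
      3 * ε * (∑ i ∈ D, π i) ≤ ∑ i ∈ Y, π i ∧
      (∑ i ∈ Y, π i) < (1/2) * ∑ i ∈ D, π i ∧
      3 * ε * (∑ i ∈ D, ω i) ≤ ∑ i ∈ Y, ω i :=
  stmt4_general ε hε hε' D π ω hw0 hprof hsmall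
end

section
/- Let 0 < ε < 1, let η be a positive integer, and let τ be a positive integer with τ ≥ η·(2·ln(1/ε)/ln(1+ε) + 1). Let b_1 ≤ b_2 ≤ ⋯ ≤ b_k be positive reals such that each b_r equals (1+ε)^{q_r} for some integer q_r, and each value occurs at most η times among b_1, …, b_k. Then b_r ≤ ε²·b_{r+τ} for every index r with 1 ≤ r ≤ k − τ. -/
/-!
The exponents `q_r` are nondecreasing, and every value is taken at most `η` times, so the
`τ + 1` entries `b_r, …, b_{r+τ}` need at least `(τ + 1) / η` distinct exponents. Hence
`q_{r+τ} - q_r + 1 ≥ (τ + 1) / η > 2 log(1/ε) / log(1 + ε) + 1`,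
i.e. `(1 + ε)^(q_{r+τ} - q_r) ≥ 1/ε²`.
-/

open Finset Real

theorem card_Icc_le_mul_of_monotoneOn {ι : Type*} [Preorder ι] [LocallyFiniteOrder ι]
    {q : ι → ℤ} {r s : ι} (hrs : r ≤ s) (hq : MonotoneOn q (Set.Icc r s)) {η : ℕ}
    (hfib : ∀ z, ((Icc r s).filter (q · = z)).card ≤ η) :
    ((Icc r s).card : ℤ) ≤ η * (q s - q r + 1) := by
  have hmaps : (Icc r s).image q ⊆ Icc (q r) (q s) := by
    intro z hz
    obtain ⟨t, ht, rfl⟩ := mem_image.mp hz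
    rw [mem_Icc] at ht ⊢
    exact ⟨hq ⟨le_rfl, hrs⟩ ht ht.1, hq ht ⟨hrs, le_rfl⟩ ht.2⟩
  have hqrs : q r ≤ q s := hq ⟨le_rfl, hrs⟩ ⟨hrs, le_rfl⟩ hrs
  have hcard : (Icc r s).card ≤ η * (Icc (q r) (q s)).card :=
    calc (Icc r s).card ≤ η * ((Icc r s).image q).card :=
          card_le_mul_card_image _ _ fun z _ => hfib z
      _ ≤ η * (Icc (q r) (q s)).card := Nat.mul_le_mul_left _ (card_le_card hmaps)
  rw [Int.card_Icc, ← Int.ofNat_le] at hcard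
  push_cast [Int.toNat_of_nonneg (by omega : 0 ≤ q s + 1 - q r)] at hcard
  linarith

theorem le_zpow_of_log_div_log_le {a y : ℝ} (ha : 1 < a) (hy : 0 < y) {d : ℤ}
    (h : log y / log a ≤ d) : y ≤ a ^ d := by
  rw [← log_le_log_iff hy (zpow_pos (by linarith) d), log_zpow]
  exact (div_le_iff₀ (log_pos ha)).mp h

theorem zpow_le_sq_mul_zpow {ε : ℝ} (hε : 0 < ε) {m n : ℤ}
    (h : 2 * log (1 / ε) / log (1 + ε) ≤ (n - m : ℤ)) :
    (1 + ε) ^ m ≤ ε ^ 2 * (1 + ε) ^ n := by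
  have hsq : 1 / ε ^ 2 ≤ (1 + ε) ^ (n - m) := by
    refine le_zpow_of_log_div_log_le (by linarith) (by positivity) ?_
    rwa [← one_div_pow, log_pow, Nat.cast_ofNat]
  calc (1 + ε) ^ m = ε ^ 2 * (1 / ε ^ 2) * (1 + ε) ^ m := by field_simp
    _ ≤ ε ^ 2 * (1 + ε) ^ (n - m) * (1 + ε) ^ m := by gcongr
    _ = ε ^ 2 * (1 + ε) ^ n := by rw [mul_assoc, ← zpow_add₀ (by positivity), sub_add_cancel]

theorem stmt5_general (ε : ℝ) (hε0 : 0 < ε)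
    (η τ : ℕ)
    (hτ : (η : ℝ) * (2 * Real.log (1/ε) / Real.log (1 + ε) + 1) ≤ (τ : ℝ))
    (k : ℕ) (b : Fin k → ℝ) (q : Fin k → ℤ)
    (hb : ∀ r, b r = (1 + ε) ^ (q r))
    (hmono : ∀ r s : Fin k, r ≤ s → b r ≤ b s)
    (hcount : ∀ x : ℝ, (Finset.univ.filter (fun r : Fin k => b r = x)).card ≤ η) :
    ∀ r s : Fin k, (s : ℕ) = (r : ℕ) + τ → b r ≤ ε ^ 2 * b s := by
  intro r s hrs
  have hq : Monotone q := fun t u htu => by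
    simpa only [hb, zpow_le_zpow_iff_right₀ (by linarith : 1 < 1 + ε)] using hmono t u htu
  have hfib (z : ℤ) : ((Icc r s).filter (q · = z)).card ≤ η :=
    (card_le_card fun t ht => by simp [hb, (mem_filter.mp ht).2]).trans (hcount ((1 + ε) ^ z))
  have hgap := card_Icc_le_mul_of_monotoneOn (by simp [Fin.le_def, hrs]) (hq.monotoneOn _) hfib
  rw [Fin.card_Icc, hrs, show r.val + τ + 1 - r.val = τ + 1 by omega] at hgap
  have hgapℝ : (τ : ℝ) + 1 ≤ η * ((q s - q r : ℤ) + 1) := by exact_mod_cast hgap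
  rw [hb, hb]
  refine zpow_le_sq_mul_zpow hε0 (le_of_lt ?_)
  exact lt_of_add_lt_add_right
    (lt_of_mul_lt_mul_left (hτ.trans_lt (by linarith)) (Nat.cast_nonneg η))

/-- Claim 15 (clm:large-capacity-diff): if `b_1 ≤ ⋯ ≤ b_k` are powers of `1 + ε`
with each value occurring at most `η` times, and `τ ≥ η·(2·ln(1/ε)/ln(1+ε) + 1)`,
then entries `τ` positions apart differ by a factor of at least `1/ε²`. -/
theorem stmt5 (ε : ℝ) (hε0 : 0 < ε) (hε1 : ε < 1)
    (η τ : ℕ) (hη : 0 < η) (hτ0 : 0 < τ)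
    (hτ : (η : ℝ) * (2 * Real.log (1/ε) / Real.log (1 + ε) + 1) ≤ (τ : ℝ))
    (k : ℕ) (b : Fin k → ℝ) (q : Fin k → ℤ)
    (hb : ∀ r, b r = (1 + ε) ^ (q r))
    (hmono : ∀ r s : Fin k, r ≤ s → b r ≤ b s)
    (hcount : ∀ x : ℝ, (Finset.univ.filter (fun r : Fin k => b r = x)).card ≤ η) :
    ∀ r s : Fin k, (s : ℕ) = (r : ℕ) + τ → b r ≤ ε ^ 2 * b s :=
  stmt5_general ε hε0 η τ hτ k b q hb hmono hcount
end

section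
/- There exists a constant ε₀ > 0 such that the following holds for every ε ∈ (0, ε₀]. Let I be a finite set of items where each item i has profit p(i) ≥ 0 and weight w(i) ≥ 0, with p(i) = 0 whenever w(i) = 0, and p(i) < 2/3 − 6ε for every i ∈ I. Suppose there exist pairwise disjoint subsets X_1, …, X_m ⊆ I with w(X_j) ≤ 1 and p(X_j) ≥ 1 for every j ∈ {1,…,m}. Then there exist pairwise disjoint subsets I_1, …, I_m ⊆ I with w(I_j) ≤ 1 for every j such that (I_1, …, I_m) is slack and p(I_j) ≥ 2/3 − ε for every j ∈ {1,…,m}. -/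
universe u

variable {ι : Type u}

/-- An item is heavy if its weight is at least `1 - ε²`. -/
def Heavy (ε : ℝ) (w : ι → ℝ) (i : ι) : Prop := 1 - ε ^ 2 ≤ w i

/-- A solution `(A 1, …, A m)` is slack if for every knapsack with at least three
items exactly one of the following holds: (i) all its items are light and its
weight is at most `1 - ε³`; (ii) it contains a heavy item `h` and
`w(A j) - w h ≤ (1 - ε)(1 - w h)`. -/
def Slack (ε : ℝ) {m : ℕ} (w : ι → ℝ) (A : Fin m → Finset ι) : Prop :=
  ∀ j, 3 ≤ (A j).card →
    Xor' ((∀ i ∈ A j, ¬ Heavy ε w i) ∧ ∑ i ∈ A j, w i ≤ 1 - ε ^ 3)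
      (∃ h ∈ A j, Heavy ε w h ∧ (∑ i ∈ A j, w i) - w h ≤ (1 - ε) * (1 - w h))

/-!
Each knapsack `X` (weight at most `1`, profit at least `1`) is repacked on its own. If it
has no heavy item and weight at most `1 - ε³`, keep it; if its heavy item `a` has profit at
most `1/3`, drop `a`. Otherwise fix an anchor `a` (the heavy item, or else an item of maximal
profit). If `a` and one more item reach `2/3 - ε`, that pair is a knapsack of two items,
on which slackness is vacuous. If not, every other item has profit below `2/3 - ε - p a`, and
the other items, whose weight exceeds the capacity `C` left next to `a` by a factor at most
`1 + 2ε`, are cut down to weight `C` by discarding items of least profit density: this loses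
at most a `2ε` fraction of their profit plus one item. In the light case
`C = 1 - ε³ - w a` leaves room `ε³`; in the heavy case `C = (1 - ε)(1 - w a)` is exactly the
slack required of the items next to `a`.
-/

open Finset

section Greedy

variable {p w : ι → ℝ} {T : Finset ι}

theorem exists_mul_sum_le_sum_mul (hw : ∀ i ∈ T, 0 ≤ w i) (hp : ∀ i ∈ T, 0 ≤ p i)
    (hT : 0 < ∑ i ∈ T, w i) :
    ∃ i ∈ T, 0 < w i ∧ p i * ∑ j ∈ T, w j ≤ (∑ j ∈ T, p j) * w i := by
  classical
  obtain ⟨i₀, hi₀, hwi₀⟩ := exists_lt_of_sum_lt (s := T) (f := 0) (g := w) (by simpa using hT)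
  have hne : (T.filter fun i => 0 < w i).Nonempty := ⟨i₀, mem_filter.mpr ⟨hi₀, hwi₀⟩⟩
  obtain ⟨i, hiF, hmin⟩ := exists_min_image _ (fun i => p i / w i) hne
  obtain ⟨hiT, hwi⟩ := mem_filter.mp hiF
  refine ⟨i, hiT, hwi, ?_⟩
  rw [mul_sum, sum_mul]
  refine sum_le_sum fun j hj => ?_
  rcases (hw j hj).eq_or_lt with h0 | h0
  · rw [← h0, mul_zero]
    exact mul_nonneg (hp j hj) hwi.le
  · exact (div_le_div_iff₀ hwi h0).mp (hmin j (mem_filter.mpr ⟨hj, h0⟩))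

/-- Fractional-knapsack bound for the greedy removal of items of least profit density. -/
theorem exists_subset_sum_le_profit_loss_le {B C : ℝ} (hB : 0 ≤ B) (hC : 0 < C)
    (hw : ∀ i ∈ T, 0 ≤ w i) (hp : ∀ i ∈ T, 0 ≤ p i) (hpB : ∀ i ∈ T, p i ≤ B) :
    ∃ S ⊆ T, ∑ i ∈ S, w i ≤ C ∧
      C * ((∑ i ∈ T, p i) - ∑ i ∈ S, p i) ≤
        max ((∑ i ∈ T, w i) - C) 0 * ∑ i ∈ T, p i + C * B := by
  induction T using Finset.strongInduction with
  | H T ih =>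
    classical
    have hpT : 0 ≤ ∑ i ∈ T, p i := sum_nonneg hp
    by_cases hwT : ∑ i ∈ T, w i ≤ C
    · refine ⟨T, subset_rfl, hwT, ?_⟩
      nlinarith [mul_nonneg (le_max_right ((∑ i ∈ T, w i) - C) 0) hpT]
    push Not at hwT
    obtain ⟨i, hiT, hwi, hdensity⟩ := exists_mul_sum_le_sum_mul hw hp (hC.trans hwT)
    have hpi : 0 ≤ p i := hp i hiT
    have hpe := sum_erase_add T p hiT
    have hwe := sum_erase_add T w hiT
    rw [max_eq_left (by linarith)]
    by_cases hwR : ∑ j ∈ T.erase i, w j ≤ C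
    · refine ⟨T.erase i, erase_subset i T, hwR, ?_⟩
      nlinarith [hpB i hiT, mul_nonneg (sub_nonneg.mpr hwT.le) hpT]
    push Not at hwR
    obtain ⟨S, hS, hSw, hSp⟩ := ih (T.erase i) (erase_ssubset hiT)
      (fun j hj => hw j (mem_of_mem_erase hj)) (fun j hj => hp j (mem_of_mem_erase hj))
      (fun j hj => hpB j (mem_of_mem_erase hj))
    refine ⟨S, hS.trans (erase_subset i T), hSw, ?_⟩
    rw [max_eq_left (by linarith)] at hSp
    -- removing `i` first costs `C * p i`, which the density bound pays for
    nlinarith [mul_nonneg hpi (show 0 ≤ 2 * ∑ j ∈ T, w j - w i - 2 * C by linarith)]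

theorem exists_subset_sum_le_of_sum_le {δ B C : ℝ} (hδ : 0 ≤ δ) (hB : 0 ≤ B) (hC : 0 < C)
    (hw : ∀ i ∈ T, 0 ≤ w i) (hp : ∀ i ∈ T, 0 ≤ p i) (hpB : ∀ i ∈ T, p i ≤ B)
    (hwT : ∑ i ∈ T, w i ≤ (1 + δ) * C) :
    ∃ S ⊆ T, ∑ i ∈ S, w i ≤ C ∧ (1 - δ) * ∑ i ∈ T, p i - B ≤ ∑ i ∈ S, p i := by
  obtain ⟨S, hST, hSw, hSp⟩ := exists_subset_sum_le_profit_loss_le hB hC hw hp hpB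
  refine ⟨S, hST, hSw, ?_⟩
  have hexcess : max ((∑ i ∈ T, w i) - C) 0 ≤ δ * C :=
    max_le (by linarith) (by positivity)
  have : C * ((∑ i ∈ T, p i) - ∑ i ∈ S, p i) ≤ C * (δ * ∑ i ∈ T, p i + B) := by
    nlinarith [mul_le_mul_of_nonneg_right hexcess (sum_nonneg hp)]
  nlinarith [le_of_mul_le_mul_left this hC]

end Greedy

/-- The condition that `Slack` imposes on a single knapsack. -/
def IsSlackSet (ε : ℝ) (w : ι → ℝ) (A : Finset ι) : Prop :=
  3 ≤ A.card →
    Xor ((∀ i ∈ A, ¬ Heavy ε w i) ∧ ∑ i ∈ A, w i ≤ 1 - ε ^ 3)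
      (∃ h ∈ A, Heavy ε w h ∧ (∑ i ∈ A, w i) - w h ≤ (1 - ε) * (1 - w h))

section IsSlackSet

variable {ε : ℝ} {w : ι → ℝ} {A : Finset ι}

theorem isSlackSet_of_card_le_two (hA : A.card ≤ 2) : IsSlackSet ε w A :=
  fun h3 => absurd h3 (by omega)

theorem isSlackSet_of_forall_not_heavy (hl : ∀ i ∈ A, ¬ Heavy ε w i)
    (hw : ∑ i ∈ A, w i ≤ 1 - ε ^ 3) : IsSlackSet ε w A :=
  fun _ => Or.inl ⟨⟨hl, hw⟩, fun ⟨h, hhA, hh, _⟩ => hl h hhA hh⟩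

theorem isSlackSet_of_heavy_mem {h : ι} (hhA : h ∈ A) (hh : Heavy ε w h)
    (hw : (∑ i ∈ A, w i) - w h ≤ (1 - ε) * (1 - w h)) : IsSlackSet ε w A :=
  fun _ => Or.inr ⟨⟨h, hhA, hh, hw⟩, fun ⟨hl, _⟩ => hl h hhA hh⟩

end IsSlackSet

section Repacking

variable {ε : ℝ} {p w : ι → ℝ} {X : Finset ι}

theorem exists_slack_pair [DecidableEq ι] {a b : ι} (ha : a ∈ X) (hb : b ∈ X.erase a)
    (hab : 2 / 3 - ε ≤ p a + p b) :
    ∃ A ⊆ X, 2 / 3 - ε ≤ ∑ i ∈ A, p i ∧ IsSlackSet ε w A := by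
  refine ⟨{a, b}, insert_subset ha (singleton_subset_iff.mpr (mem_of_mem_erase hb)), ?_,
    isSlackSet_of_card_le_two (card_le_two)⟩
  rwa [sum_pair (ne_of_mem_erase hb).symm]

theorem sum_pos_of_sum_pos_of_eq_zero (hw : ∀ i ∈ X, 0 ≤ w i)
    (hz : ∀ i ∈ X, w i = 0 → p i = 0) (hp : 0 < ∑ i ∈ X, p i) : 0 < ∑ i ∈ X, w i := by
  refine (sum_nonneg hw).lt_of_ne fun h0 => hp.ne' (sum_eq_zero fun i hi => hz i hi ?_)
  exact (sum_eq_zero_iff_of_nonneg hw).mp h0.symm i hi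

theorem exists_slack_subset_of_heavy_mem (hε : 0 < ε) (hε' : ε ≤ 1 / 2)
    (hp0 : ∀ i ∈ X, 0 ≤ p i) (hw0 : ∀ i ∈ X, 0 ≤ w i) (hz : ∀ i ∈ X, w i = 0 → p i = 0)
    (hpmax : ∀ i ∈ X, p i ≤ 2 / 3 - ε) (hwX : ∑ i ∈ X, w i ≤ 1) (hpX : 1 ≤ ∑ i ∈ X, p i)
    {h : ι} (hhX : h ∈ X) (hh : Heavy ε w h) :
    ∃ A ⊆ X, 2 / 3 - ε ≤ ∑ i ∈ A, p i ∧ IsSlackSet ε w A := by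
  classical
  set L := X.erase h
  have hLX : L ⊆ X := erase_subset h X
  have hpL := sum_erase_add X p hhX
  have hwL := sum_erase_add X w hhX
  have hh' : 1 - ε ^ 2 ≤ w h := hh
  have hwLle : ∑ i ∈ L, w i ≤ ε ^ 2 := by linarith
  have hlight : ∀ i ∈ L, ¬ Heavy ε w i := fun i hi hi' => by
    have : w i ≤ ∑ j ∈ L, w j := single_le_sum (fun j hj => hw0 j (hLX hj)) hi
    have : 1 - ε ^ 2 ≤ w i := hi'
    nlinarith
  by_cases hph : p h ≤ 1 / 3
  · exact ⟨L, hLX, by linarith, isSlackSet_of_forall_not_heavy hlight (by nlinarith)⟩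
  push Not at hph
  by_cases hpair : ∃ b ∈ L, 2 / 3 - ε ≤ p h + p b
  · obtain ⟨b, hb, hpb⟩ := hpair
    exact exists_slack_pair hhX hb hpb
  push Not at hpair
  have hwLpos : 0 < ∑ i ∈ L, w i := sum_pos_of_sum_pos_of_eq_zero
    (fun i hi => hw0 i (hLX hi)) (fun i hi => hz i (hLX hi)) (by linarith [hpmax h hhX])
  have hcap : ∑ i ∈ L, w i ≤ (1 + 2 * ε) * ((1 - ε) * (1 - w h)) := by
    have : 0 ≤ ε * (1 - 2 * ε) * (1 - w h) :=
      mul_nonneg (mul_nonneg hε.le (by linarith)) (by linarith)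
    linarith
  obtain ⟨S, hSL, hSw, hSp⟩ := exists_subset_sum_le_of_sum_le (δ := 2 * ε)
    (B := 2 / 3 - ε - p h) (C := (1 - ε) * (1 - w h)) (by positivity)
    (by linarith [hpmax h hhX]) (by nlinarith) (fun i hi => hw0 i (hLX hi))
    (fun i hi => hp0 i (hLX hi)) (fun i hi => by linarith [hpair i hi]) hcap
  have hhS : h ∉ S := fun hS => notMem_erase h X (hSL hS)
  refine ⟨insert h S, insert_subset hhX (hSL.trans hLX), ?_, isSlackSet_of_heavy_mem
    (mem_insert_self h S) hh (by rw [sum_insert hhS]; linarith)⟩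
  rw [sum_insert hhS]
  nlinarith [mul_le_mul_of_nonneg_left (show 1 - p h ≤ ∑ i ∈ L, p i by linarith)
    (show 0 ≤ 1 - 2 * ε by linarith)]

theorem exists_slack_subset_of_forall_not_heavy (hε : 0 < ε) (hε' : ε ≤ 1 / 6)
    (hp0 : ∀ i ∈ X, 0 ≤ p i) (hw0 : ∀ i ∈ X, 0 ≤ w i)
    (hwX : ∑ i ∈ X, w i ≤ 1) (hpX : 1 ≤ ∑ i ∈ X, p i) (hl : ∀ i ∈ X, ¬ Heavy ε w i) :
    ∃ A ⊆ X, 2 / 3 - ε ≤ ∑ i ∈ A, p i ∧ IsSlackSet ε w A := by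
  classical
  by_cases hwX' : ∑ i ∈ X, w i ≤ 1 - ε ^ 3
  · exact ⟨X, subset_rfl, by linarith, isSlackSet_of_forall_not_heavy hl hwX'⟩
  have hXne : X.Nonempty := nonempty_of_sum_ne_zero (by linarith : ∑ i ∈ X, p i ≠ 0)
  obtain ⟨t, htX, htmax⟩ := exists_max_image X p hXne
  set T := X.erase t
  have hTX : T ⊆ X := erase_subset t X
  have hpT := sum_erase_add X p htX
  have hwT := sum_erase_add X w htX
  by_cases hpair : ∃ b ∈ T, 2 / 3 - ε ≤ p t + p b
  · obtain ⟨b, hb, hpb⟩ := hpair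
    exact exists_slack_pair htX hb hpb
  push Not at hpair
  have hwt : w t < 1 - ε ^ 2 := not_le.mp (hl t htX)
  have hpt : 0 ≤ p t := hp0 t htX
  -- every other item is below both `p t` and, since two of them miss `2/3 - ε`, `1/3 - ε/2`
  set B := min (p t) (1 / 3 - ε / 2)
  have hBT : ∀ i ∈ T, p i ≤ B := fun i hi =>
    le_min (htmax i (hTX hi)) (by linarith [htmax i (hTX hi), hpair i hi])
  obtain ⟨S, hST, hSw, hSp⟩ := exists_subset_sum_le_of_sum_le (δ := 2 * ε) (B := B)
    (C := 1 - ε ^ 3 - w t) (by positivity) (le_min hpt (by linarith)) (by nlinarith)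
    (fun i hi => hw0 i (hTX hi)) (fun i hi => hp0 i (hTX hi)) hBT (by nlinarith)
  have htS : t ∉ S := fun hS => notMem_erase t X (hST hS)
  have hAX : insert t S ⊆ X := insert_subset htX (hST.trans hTX)
  refine ⟨insert t S, hAX, ?_, isSlackSet_of_forall_not_heavy (fun i hi => hl i (hAX hi))
    (by rw [sum_insert htS]; linarith)⟩
  rw [sum_insert htS]
  have hB₁ : B ≤ p t := min_le_left _ _
  have hB₂ : B ≤ 1 / 3 - ε / 2 := min_le_right _ _
  nlinarith [mul_le_mul_of_nonneg_left (show 1 - p t ≤ ∑ i ∈ T, p i by linarith)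
    (show 0 ≤ 1 - 2 * ε by linarith), mul_nonneg (show 0 ≤ 1 - 2 * ε by linarith)
    (sub_nonneg.mpr hB₂), mul_nonneg hε.le (sub_nonneg.mpr hB₁)]

theorem exists_slack_subset (hε : 0 < ε) (hε' : ε ≤ 1 / 6)
    (hp0 : ∀ i ∈ X, 0 ≤ p i) (hw0 : ∀ i ∈ X, 0 ≤ w i) (hz : ∀ i ∈ X, w i = 0 → p i = 0)
    (hpmax : ∀ i ∈ X, p i ≤ 2 / 3 - ε) (hwX : ∑ i ∈ X, w i ≤ 1) (hpX : 1 ≤ ∑ i ∈ X, p i) :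
    ∃ A ⊆ X, 2 / 3 - ε ≤ ∑ i ∈ A, p i ∧ IsSlackSet ε w A := by
  by_cases hheavy : ∃ h ∈ X, Heavy ε w h
  · obtain ⟨h, hhX, hh⟩ := hheavy
    exact exists_slack_subset_of_heavy_mem hε (by linarith) hp0 hw0 hz hpmax hwX hpX hhX hh
  · push Not at hheavy
    exact exists_slack_subset_of_forall_not_heavy hε hε' hp0 hw0 hwX hpX hheavy

end Repacking

/-- Step 1 of Lemma 4.4: for sufficiently small `ε`, any identical-capacity BMKP
instance admitting a feasible solution of value at least 1 (with every item profit
below `2/3 - 6ε`) admits a slack feasible solution of value at least `2/3 - ε`. -/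
theorem stmt6 : ∃ ε₀ : ℝ, 0 < ε₀ ∧
    ∀ ε : ℝ, 0 < ε → ε ≤ ε₀ →
    ∀ (ι : Type u) (p w : ι → ℝ) (I : Finset ι) (m : ℕ) (X : Fin m → Finset ι),
      (∀ i ∈ I, 0 ≤ p i) → (∀ i ∈ I, 0 ≤ w i) →
      (∀ i ∈ I, w i = 0 → p i = 0) →
      (∀ i ∈ I, p i < 2/3 - 6 * ε) →
      (∀ j, X j ⊆ I) → (∀ j j', j ≠ j' → Disjoint (X j) (X j')) →
      (∀ j, ∑ i ∈ X j, w i ≤ 1) → (∀ j, 1 ≤ ∑ i ∈ X j, p i) →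
      ∃ A : Fin m → Finset ι,
        (∀ j, A j ⊆ I) ∧ (∀ j j', j ≠ j' → Disjoint (A j) (A j')) ∧
        (∀ j, ∑ i ∈ A j, w i ≤ 1) ∧
        Slack ε w A ∧
        (∀ j, 2/3 - ε ≤ ∑ i ∈ A j, p i) := by
  refine ⟨1 / 6, by norm_num, fun ε hε hε' ι p w I m X hp0 hw0 hz hpmax hXI hXdisj hXw hXp => ?_⟩
  choose A hAX hAp hAslack using fun j => exists_slack_subset hε hε'
    (fun i hi => hp0 i (hXI j hi)) (fun i hi => hw0 i (hXI j hi))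
    (fun i hi => hz i (hXI j hi)) (fun i hi => by linarith [hpmax i (hXI j hi)])
    (hXw j) (hXp j)
  refine ⟨A, fun j => (hAX j).trans (hXI j),
    fun j j' hjj' => (hXdisj j j' hjj').mono (hAX j) (hAX j'), fun j => ?_, hAslack, hAp⟩
  exact (sum_le_sum_of_subset_of_nonneg (hAX j) fun i hi _ => hw0 i (hXI j hi)).trans (hXw j)
end

section
/- There exists a constant ε₀ > 0 such that the following holds for every ε ∈ (0, ε₀]. Let I be a finite set of items where each item i has profit p(i) ≥ 0 and weight w(i) ≥ 0, with p(i) = 0 whenever w(i) = 0, p(i) < 2/3 − 6ε for every i ∈ I, and p(i) ≥ ε whenever w(i) ≥ 1 − ε² (every heavy item is expensive). Suppose there exist pairwise disjoint subsets X_1, …, X_m ⊆ I with w(X_j) ≤ 1 and p(X_j) ≥ 1 for every j. Then there exist pairwise disjoint subsets I_1, …, I_m ⊆ I with w(I_j) ≤ 1 for every j such that (I_1, …, I_m) is slack, p(I_j) ≥ 2/3 − ε for every j, and (I_1, …, I_m) admits a profile T ⊆ I of heavy items with |T| ≤ 2/ε². -/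
/-!
Every bag holds at most one heavy item. A bag is repacked on its own unless its heavy item
`h` can be completed to profit `2/3 - ε` neither by all of its light items nor by a single
one; a bag without heavy item is cut down by a greedy selection by profit density, which
keeps its weight below `1 - ε³`. The remaining (critical) bags are grouped by the class
`⌊p h / ε⌋` and, within a class, paired so that the capacity `1 - w h` of every receiver
dominates that of every donor. A receiver keeps its heavy item and takes from its donor a
dense set of light items worth the missing profit, of weight at most `(1 - 2ε)` times the
donor's capacity; the donor keeps the remaining light items of both bags, of weight at most
`2ε²`. The receiver of least capacity in a class witnesses the profile for all receivers of
that class, so the profile has at most `2/(3ε) + 1` items.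
-/

universe u

variable {ι : Type u}

/-- An item is expensive if its profit is at least `ε`. -/
def Expensive (ε : ℝ) (p : ι → ℝ) (i : ι) : Prop := ε ≤ p i

/-- `T` is a profile of the solution `A`: for every knapsack `A j` containing a
critical heavy item `h` (heavy, and `|A j| ≥ 3`), there is `t ∈ T` with
`⌊p t / ε⌋ = ⌊p h / ε⌋` and `w(A j) - w h ≤ (1-ε)(1 - w t) ≤ (1-ε)(1 - w h)`. -/
def IsProfile (ε : ℝ) {m : ℕ} (p w : ι → ℝ) (A : Fin m → Finset ι)
    (T : Finset ι) : Prop :=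
  ∀ j : Fin m, ∀ h ∈ A j, Heavy ε w h → 3 ≤ (A j).card →
    ∃ t ∈ T, ⌊p t / ε⌋ = ⌊p h / ε⌋ ∧
      (∑ i ∈ A j, w i) - w h ≤ (1 - ε) * (1 - w t) ∧
      (1 - ε) * (1 - w t) ≤ (1 - ε) * (1 - w h)

open Finset Function

section Pairing

variable {α β γ : Type*} [LinearOrder γ]

theorem exists_pairing [DecidableEq α] (f : α → γ) (J : Finset α) :
    ∃ (σ : α → α) (S : Finset α), S ⊆ J ∧ ∀ j ∈ J, σ j ∈ J ∧ σ (σ j) = j ∧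
      (j ∉ S → σ j ∈ S ∧ σ j ≠ j) ∧ (j ∈ S → σ j ≠ j → σ j ∉ S) ∧
      (j ∈ S → ∀ k ∈ S, f (σ j) ≤ f k) := by
  induction J using Finset.strongInduction with
  | H J ih =>
  rcases J.eq_empty_or_nonempty with rfl | hJ
  · exact ⟨id, ∅, by simp⟩
  -- pair a minimum `a` with a maximum `b` and recurse on the rest
  obtain ⟨a, haJ, ha⟩ := J.exists_min_image f hJ
  obtain ⟨b, hbJ, hb⟩ := J.exists_max_image f hJ
  set J' := (J.erase a).erase b
  have hJ' : J' ⊂ J := (erase_subset _ _).trans_ssubset (erase_ssubset haJ)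
  obtain ⟨σ, S, hSJ, hσ⟩ := ih J' hJ'
  have haJ' : a ∉ J' := fun h => by simp [J'] at h
  have hbJ' : b ∉ J' := fun h => by simp [J'] at h
  have hSsub : S ⊆ J := hSJ.trans hJ'.subset
  refine ⟨fun x => if x = a then b else if x = b then a else σ x, insert b S,
    insert_subset hbJ hSsub, fun j hj => ?_⟩
  by_cases hja : j = a
  · subst hja
    by_cases hab : j = b
    · subst hab; simpa [hj] using fun k hk => ha k (hSsub hk)
    · have : j ∉ S := fun h => haJ' (hSJ h)
      simp [hab, Ne.symm hab, this, hbJ]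
  by_cases hjb : j = b
  · subst hjb
    have : a ∉ S := fun h => haJ' (hSJ h)
    simpa [hja, Ne.symm hja, this, haJ] using ⟨ha _ hbJ, fun k hk => ha k (hSsub hk)⟩
  have hjJ' : j ∈ J' := by simp [J', hja, hjb, hj]
  obtain ⟨hσJ', hσσ, hout, hin, hle⟩ := hσ j hjJ'
  have hσa : σ j ≠ a := fun h => haJ' (h ▸ hσJ')
  have hσb : σ j ≠ b := fun h => hbJ' (h ▸ hσJ')
  refine ⟨by simp [hja, hjb, hJ'.subset hσJ'], by simp [hja, hjb, hσa, hσb, hσσ], ?_, ?_, ?_⟩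
  · simp only [hja, hjb, if_false, mem_insert, false_or]
    exact fun hjS => ⟨Or.inr (hout hjS).1, (hout hjS).2⟩
  · simp only [hja, hjb, if_false, mem_insert, false_or, not_or]
    exact fun hjS hne => ⟨hσb, hin hjS hne⟩
  · simp only [hja, hjb, if_false, mem_insert, false_or]
    rintro hjS k (rfl | hkS)
    · exact hb _ (hJ'.subset hσJ')
    · exact hle hjS k hkS

theorem exists_classwise_pairing [DecidableEq α] [DecidableEq β] (g : α → β) (f : α → γ)
    (D : Finset α) :
    ∃ (σ : α → α) (S : Finset α), Involutive σ ∧ (∀ j ∉ D, σ j = j) ∧ S ⊆ D ∧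
      ∀ j ∈ D, σ j ∈ D ∧ g (σ j) = g j ∧ (j ∉ S → σ j ∈ S ∧ σ j ≠ j) ∧
        (j ∈ S → σ j ≠ j → σ j ∉ S) ∧ (j ∈ S → ∀ k ∈ S, g k = g j → f (σ j) ≤ f k) := by
  choose σ S hSD hσ using fun c => exists_pairing f (D.filter (g · = c))
  have hσD : ∀ j ∈ D, σ (g j) j ∈ D ∧ g (σ (g j) j) = g j := fun j hj =>
    mem_filter.1 (hσ (g j) j (mem_filter.2 ⟨hj, rfl⟩)).1
  have hS : ∀ j, j ∈ D.filter (fun j => j ∈ S (g j)) ↔ j ∈ S (g j) := fun j =>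
    ⟨fun h => (mem_filter.1 h).2, fun h => mem_filter.2 ⟨(mem_filter.1 (hSD _ h)).1, h⟩⟩
  refine ⟨fun j => if j ∈ D then σ (g j) j else j, D.filter (fun j => j ∈ S (g j)),
    fun j => ?_, fun j hj => if_neg hj, filter_subset _ _, fun j hj => ?_⟩
  · by_cases hj : j ∈ D
    · obtain ⟨hσjD, hσjg⟩ := hσD j hj
      simp only [hj, hσjD, hσjg, if_true]
      exact (hσ (g j) j (mem_filter.2 ⟨hj, rfl⟩)).2.1
    · simp [hj]
  obtain ⟨hσjD, hσjg⟩ := hσD j hj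
  obtain ⟨-, -, hout, hin, hle⟩ := hσ (g j) j (mem_filter.2 ⟨hj, rfl⟩)
  simp only [hj, if_true, hS, hσjD, hσjg, true_and]
  exact ⟨hout, hin, fun hjS k hkS hk => hle hjS k (hk ▸ hkS)⟩

theorem exists_classwise_argmin [DecidableEq β] (g : α → β) (f : α → γ) (S : Finset α) :
    ∃ P ⊆ S, P.card ≤ (S.image g).card ∧ ∀ j ∈ S, ∃ t ∈ P, g t = g j ∧ f t ≤ f j := by
  classical
  have hmin : ∀ c ∈ S.image g, ∃ t ∈ S, g t = c ∧ ∀ k ∈ S, g k = c → f t ≤ f k := by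
    intro c hc
    obtain ⟨j, hj, rfl⟩ := mem_image.1 hc
    obtain ⟨t, ht, htmin⟩ := (S.filter (g · = g j)).exists_min_image f ⟨j, by simp [hj]⟩
    exact ⟨t, (mem_filter.1 ht).1, (mem_filter.1 ht).2,
      fun k hk hkc => htmin k (mem_filter.2 ⟨hk, hkc⟩)⟩
  choose t htS htc ht using hmin
  refine ⟨(S.image g).attach.image fun c => t c.1 c.2, ?_, card_image_le.trans card_attach.le,
    fun j hj => ⟨t (g j) (mem_image_of_mem g hj),
      mem_image.2 ⟨⟨g j, mem_image_of_mem g hj⟩, mem_attach _ _, rfl⟩, htc _ _, ht _ _ j hj rfl⟩⟩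
  simp only [subset_iff, mem_image, mem_attach, true_and]
  rintro _ ⟨c, rfl⟩
  exact htS _ _

end Pairing

theorem pairwise_disjoint_of_le_sup_involutive {κ α : Type*} [DistribLattice α] [OrderBot α]
    {X A : κ → α} {σ : κ → κ} (hX : Pairwise (Disjoint on X)) (hσ : Involutive σ)
    (hA : ∀ j, A j ≤ X j ⊔ X (σ j)) (hσA : ∀ j, σ j ≠ j → Disjoint (A j) (A (σ j))) :
    Pairwise (Disjoint on A) := by
  intro j k hjk
  by_cases hk : k = σ j
  · subst hk
    exact hσA j fun h => hjk h.symm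
  refine (Disjoint.mono (hA j) (hA k)) (Disjoint.sup_left ?_ ?_) <;>
    refine Disjoint.sup_right ?_ ?_
  · exact hX hjk
  · exact hX fun h => hk (by rw [h, hσ])
  · exact hX fun h => hk h.symm
  · exact hX fun h => hjk (hσ.injective h)

theorem card_image_floor_div_le {κ : Type*} {s : Finset κ} {f : κ → ℝ} {ε c : ℝ} (hε : 0 < ε)
    (hc : 0 ≤ c) (hf : ∀ j ∈ s, 0 ≤ f j ∧ f j ≤ c) :
    ((s.image fun j => ⌊f j / ε⌋).card : ℝ) ≤ c / ε + 1 := by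
  have hsub : s.image (fun j => ⌊f j / ε⌋) ⊆ Icc 0 ⌊c / ε⌋ := by
    simp only [subset_iff, mem_image, mem_Icc]
    rintro _ ⟨j, hj, rfl⟩
    exact ⟨Int.floor_nonneg.2 (div_nonneg (hf j hj).1 hε.le),
      Int.floor_mono (div_le_div_of_nonneg_right (hf j hj).2 hε.le)⟩
  have hM : 0 ≤ ⌊c / ε⌋ + 1 := by have := Int.floor_nonneg.2 (div_nonneg hc hε.le); omega
  calc ((s.image fun j => ⌊f j / ε⌋).card : ℝ) ≤ (Icc 0 ⌊c / ε⌋).card := by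
        exact_mod_cast card_le_card hsub
    _ = ⌊c / ε⌋ + 1 := by
        rw [Int.card_Icc, sub_zero, ← Int.cast_natCast, Int.toNat_of_nonneg hM]; push_cast; ring
    _ ≤ c / ε + 1 := by linarith [Int.floor_le (c / ε)]

theorem abs_sub_lt_of_floor_div_eq {a b ε : ℝ} (hε : 0 < ε) (h : ⌊a / ε⌋ = ⌊b / ε⌋) :
    |a - b| < ε := by
  have := Int.abs_sub_lt_one_of_floor_eq_floor h
  rwa [← sub_div, abs_div, abs_of_pos hε, div_lt_one hε] at this

theorem disjoint_insert_union_sdiff [DecidableEq ι] {a : ι} {Q La Lb : Finset ι} (ha : a ∉ La)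
    (hb : a ∉ Lb) (hQ : Q ⊆ Lb) (hL : Disjoint La Lb) : Disjoint (insert a Q) (La ∪ (Lb \ Q)) :=
  disjoint_insert_left.2 ⟨by simp [ha, hb], disjoint_union_right.2
    ⟨(hL.mono_right hQ).symm, disjoint_sdiff⟩⟩

section Density

variable {p w : ι → ℝ}

theorem exists_max_density {X : Finset ι} (hw : ∀ i ∈ X, 0 ≤ w i)
    (hwp : ∀ i ∈ X, w i = 0 → p i = 0) (hX : 0 < ∑ i ∈ X, p i) :
    ∃ i₀ ∈ X, 0 < w i₀ ∧ ∀ i ∈ X, p i * w i₀ ≤ p i₀ * w i := by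
  have hpos : ∃ i ∈ X, 0 < w i := by
    by_contra! h
    exact hX.ne' (sum_eq_zero fun i hi => hwp i hi (le_antisymm (h i hi) (hw i hi)))
  obtain ⟨i₀, hi₀, hmax⟩ := exists_max_image (X.filter (0 < w ·)) (fun i => p i / w i)
    (by simpa [Finset.Nonempty] using hpos)
  obtain ⟨hi₀X, hi₀w⟩ := mem_filter.1 hi₀
  refine ⟨i₀, hi₀X, hi₀w, fun i hi => ?_⟩
  rcases (hw i hi).eq_or_lt with hwi | hwi
  · simp [hwp i hi hwi.symm, ← hwi]
  · exact (div_le_div_iff₀ hwi hi₀w).1 (hmax i (mem_filter.2 ⟨hi, hwi⟩))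

theorem exists_subset_density_ge {X : Finset ι} {τ c : ℝ} (hp : ∀ i ∈ X, 0 ≤ p i)
    (hw : ∀ i ∈ X, 0 ≤ w i) (hwp : ∀ i ∈ X, w i = 0 → p i = 0) (hc : ∀ i ∈ X, p i < c)
    (hτ : 0 < τ) (hτX : τ ≤ ∑ i ∈ X, p i) :
    ∃ S ⊆ X, τ ≤ ∑ i ∈ S, p i ∧ ∑ i ∈ S, p i < τ + c ∧
      (∑ i ∈ S, w i) * ∑ i ∈ X, p i ≤ (∑ i ∈ S, p i) * ∑ i ∈ X, w i := by
  classical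
  induction X using Finset.strongInduction generalizing τ with
  | H X ih =>
  -- greedy selection by decreasing density: start with an item of maximal density
  obtain ⟨i₀, hi₀, hi₀w, hmax⟩ := exists_max_density hw hwp (hτ.trans_le hτX)
  have hdens : (∑ i ∈ X, p i) * w i₀ ≤ p i₀ * ∑ i ∈ X, w i := by
    rw [sum_mul, mul_sum]; exact sum_le_sum hmax
  by_cases hτi₀ : τ ≤ p i₀
  · refine ⟨{i₀}, singleton_subset_iff.2 hi₀, by rwa [sum_singleton], ?_, ?_⟩
    · rw [sum_singleton]; linarith [hc i₀ hi₀]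
    · simpa [mul_comm] using hdens
  rw [not_le] at hτi₀
  have hsplit_p := add_sum_erase X p hi₀
  have hsplit_w := add_sum_erase X w hi₀
  obtain ⟨S, hSX, hS₁, hS₂, hS₃⟩ := ih (X.erase i₀) (erase_ssubset hi₀)
    (fun i hi => hp i (mem_of_mem_erase hi)) (fun i hi => hw i (mem_of_mem_erase hi))
    (fun i hi => hwp i (mem_of_mem_erase hi)) (fun i hi => hc i (mem_of_mem_erase hi))
    (sub_pos.2 hτi₀) (by linarith)
  have hi₀S : i₀ ∉ S := fun h => notMem_erase i₀ X (hSX h)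
  refine ⟨insert i₀ S, insert_subset hi₀ (hSX.trans (erase_subset _ _)), ?_, ?_, ?_⟩
  · rw [sum_insert hi₀S]; linarith
  · rw [sum_insert hi₀S]; linarith
  rw [sum_insert hi₀S, sum_insert hi₀S, ← hsplit_p, ← hsplit_w]
  rw [← hsplit_p, ← hsplit_w] at hdens
  set P' := ∑ i ∈ X.erase i₀, p i
  have hSP' : ∑ i ∈ S, p i ≤ P' := sum_le_sum_of_subset_of_nonneg hSX
    fun i hi _ => hp i (mem_of_mem_erase hi)
  have hP' : 0 < P' := by linarith
  refine le_of_mul_le_mul_right ?_ hP'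
  nlinarith [mul_nonneg (sub_nonneg.2 hSP') (sub_nonneg.2 hdens),
    mul_nonneg (hp i₀ hi₀) (sub_nonneg.2 hS₃), mul_nonneg hP'.le (sub_nonneg.2 hS₃)]

theorem exists_subset_profit_ge_weight_le {X : Finset ι} {τ c θ : ℝ} (hp : ∀ i ∈ X, 0 ≤ p i)
    (hw : ∀ i ∈ X, 0 ≤ w i) (hwp : ∀ i ∈ X, w i = 0 → p i = 0) (hc : ∀ i ∈ X, p i < c)
    (hτ : 0 < τ) (hτX : τ ≤ ∑ i ∈ X, p i) (hθ : τ + c ≤ θ * ∑ i ∈ X, p i) :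
    ∃ S ⊆ X, τ ≤ ∑ i ∈ S, p i ∧ ∑ i ∈ S, p i < τ + c ∧ ∑ i ∈ S, w i ≤ θ * ∑ i ∈ X, w i := by
  obtain ⟨S, hSX, hS₁, hS₂, hS₃⟩ := exists_subset_density_ge hp hw hwp hc hτ hτX
  refine ⟨S, hSX, hS₁, hS₂, le_of_mul_le_mul_right ?_ (hτ.trans_le hτX)⟩
  calc (∑ i ∈ S, w i) * ∑ i ∈ X, p i ≤ (∑ i ∈ S, p i) * ∑ i ∈ X, w i := hS₃
    _ ≤ (θ * ∑ i ∈ X, p i) * ∑ i ∈ X, w i :=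
      mul_le_mul_of_nonneg_right (by linarith) (sum_nonneg hw)
    _ = θ * (∑ i ∈ X, w i) * ∑ i ∈ X, p i := by ring

end Density

section Knapsack

variable {ε : ℝ} {p w : ι → ℝ}

def IsLightOrSmall (ε : ℝ) (w : ι → ℝ) (A : Finset ι) : Prop :=
  A.card ≤ 2 ∨ (∀ i ∈ A, ¬ Heavy ε w i) ∧ ∑ i ∈ A, w i ≤ 1 - ε ^ 3

/-- The per-knapsack content of `Slack` and `IsProfile ε p w · T`. -/
def IsProfiledSlack (ε : ℝ) (p w : ι → ℝ) (T A : Finset ι) : Prop :=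
  IsLightOrSmall ε w A ∨ ∃ h ∈ A, Heavy ε w h ∧ (∀ i ∈ A, i ≠ h → ¬ Heavy ε w i) ∧
    ∃ t ∈ T, ⌊p t / ε⌋ = ⌊p h / ε⌋ ∧ (∑ i ∈ A, w i) - w h ≤ (1 - ε) * (1 - w t) ∧
      (1 - ε) * (1 - w t) ≤ (1 - ε) * (1 - w h)

theorem slack_of_forall_isProfiledSlack {m : ℕ} {A : Fin m → Finset ι} {T : Finset ι}
    (hA : ∀ j, IsProfiledSlack ε p w T (A j)) : Slack ε w A := by
  intro j hj
  rcases hA j with (hsmall | ⟨hlight, hwA⟩) | ⟨h, hh, hH, -, t, -, -, ht, hth⟩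
  · omega
  · exact Or.inl ⟨⟨hlight, hwA⟩, fun ⟨h, hh, hH, _⟩ => hlight h hh hH⟩
  · exact Or.inr ⟨⟨h, hh, hH, ht.trans hth⟩, fun ⟨hlight, _⟩ => hlight h hh hH⟩

theorem isProfile_of_forall_isProfiledSlack {m : ℕ} {A : Fin m → Finset ι} {T : Finset ι}
    (hA : ∀ j, IsProfiledSlack ε p w T (A j)) : IsProfile ε p w A T := by
  intro j h' hh' hH' hj
  rcases hA j with (hsmall | ⟨hlight, -⟩) | ⟨h, -, -, hrest, t, htT, hcls, ht, hth⟩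
  · omega
  · exact absurd hH' (hlight h' hh')
  · obtain rfl : h' = h := by_contra fun hne => hrest h' hh' hne hH'
    exact ⟨t, htT, hcls, ht, hth⟩

theorem not_heavy_of_ne_heavy [DecidableEq ι] {X : Finset ι} {h i : ι} (hε : ε ^ 2 < 1 / 2)
    (hw : ∀ i ∈ X, 0 ≤ w i) (hX : ∑ i ∈ X, w i ≤ 1) (hh : h ∈ X) (hH : Heavy ε w h) (hiX : i ∈ X)
    (hih : i ≠ h) : ¬ Heavy ε w i := by
  intro hiH
  have := sum_le_sum_of_subset_of_nonneg (insert_subset hiX (singleton_subset_iff.2 hh))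
    fun i hi _ => hw i hi
  rw [sum_pair hih] at this
  unfold Heavy at hH hiH
  linarith

theorem exists_isLightOrSmall_of_forall_not_heavy [DecidableEq ι] (hε : 0 < ε)
    (hε₀ : ε ≤ 1 / 100) {Y : Finset ι} (hp : ∀ i ∈ Y, 0 ≤ p i) (hw : ∀ i ∈ Y, 0 ≤ w i)
    (hwp : ∀ i ∈ Y, w i = 0 → p i = 0) (hub : ∀ i ∈ Y, p i < 2 / 3 - 6 * ε)
    (hYw : ∑ i ∈ Y, w i ≤ 1) (hYp : 1 ≤ ∑ i ∈ Y, p i) (hlight : ∀ i ∈ Y, ¬ Heavy ε w i) :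
    ∃ S ⊆ Y, 2 / 3 - ε ≤ ∑ i ∈ S, p i ∧ IsLightOrSmall ε w S := by
  have hY : Y.Nonempty := nonempty_of_sum_ne_zero (by linarith : ∑ i ∈ Y, p i ≠ 0)
  obtain ⟨b, hb, hbmax⟩ := Y.exists_max_image p hY
  by_cases hpair : ∃ x ∈ Y.erase b, 1 / 3 - ε / 2 ≤ p x
  · obtain ⟨x, hx, hpx⟩ := hpair
    obtain ⟨hxb, hxY⟩ := mem_erase.1 hx
    refine ⟨{b, x}, insert_subset hb (singleton_subset_iff.2 hxY), ?_, Or.inl card_le_two⟩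
    rw [sum_pair (Ne.symm hxb)]
    linarith [hbmax x hxY]
  -- otherwise `b` is completed by a dense set of items, which saves weight `ε (1 - w b)`
  push Not at hpair
  have hsplit_p := add_sum_erase Y p hb
  have hsplit_w := add_sum_erase Y w hb
  have hpb := hp b hb
  obtain ⟨S, hSY, hS₁, -, hS₃⟩ := exists_subset_profit_ge_weight_le (θ := 1 - ε)
    (fun i hi => hp i (mem_of_mem_erase hi)) (fun i hi => hw i (mem_of_mem_erase hi))
    (fun i hi => hwp i (mem_of_mem_erase hi)) hpair
    (by linarith [hub b hb] : 0 < 2 / 3 - ε - p b) (by linarith) (by nlinarith)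
  have hbS : b ∉ S := fun h => notMem_erase b Y (hSY h)
  have hbl : w b < 1 - ε ^ 2 := not_le.1 (hlight b hb)
  have hbSY : insert b S ⊆ Y := insert_subset hb (hSY.trans (erase_subset _ _))
  refine ⟨insert b S, hbSY, ?_, Or.inr ⟨fun i hi => hlight i (hbSY hi), ?_⟩⟩
  · rw [sum_insert hbS]; linarith
  · rw [sum_insert hbS]
    have : (1 - ε) * ∑ i ∈ Y.erase b, w i ≤ (1 - ε) * (1 - w b) :=
      mul_le_mul_of_nonneg_left (by linarith) (by linarith)
    nlinarith

end Knapsack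

section Critical

variable {ε : ℝ} {p w : ι → ℝ} [DecidableEq ι]

/-- The bags that are not repacked on their own but paired with a bag of the same class
`⌊p h / ε⌋`. -/
def IsCriticalBag (ε : ℝ) (p w : ι → ℝ) (X : Finset ι) (h : ι) : Prop :=
  h ∈ X ∧ Heavy ε w h ∧ ∑ i ∈ X.erase h, p i < 2 / 3 - ε ∧
    ∀ i ∈ X.erase h, p h + p i < 2 / 3 - ε

namespace IsCriticalBag

variable {X : Finset ι} {h : ι}

theorem sum_erase_weight_le (hX : IsCriticalBag ε p w X h) (hXw : ∑ i ∈ X, w i ≤ 1) :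
    ∑ i ∈ X.erase h, w i ≤ 1 - w h := by
  linarith [add_sum_erase X w hX.1]

theorem sum_erase_weight_le_sq (hX : IsCriticalBag ε p w X h) (hXw : ∑ i ∈ X, w i ≤ 1) :
    ∑ i ∈ X.erase h, w i ≤ ε ^ 2 := by
  have := hX.2.1
  unfold Heavy at this
  linarith [hX.sum_erase_weight_le hXw]

theorem one_sub_le_profit_erase (hX : IsCriticalBag ε p w X h) (hXp : 1 ≤ ∑ i ∈ X, p i) :
    1 - p h ≤ ∑ i ∈ X.erase h, p i := by
  linarith [add_sum_erase X p hX.1]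

theorem one_third_lt (hX : IsCriticalBag ε p w X h) (hXp : 1 ≤ ∑ i ∈ X, p i) :
    1 / 3 + ε < p h := by
  linarith [hX.one_sub_le_profit_erase hXp, hX.2.2.1]

theorem not_heavy (hX : IsCriticalBag ε p w X h) (hε : ε ^ 2 < 1 / 2) (hw : ∀ i ∈ X, 0 ≤ w i)
    (hXw : ∑ i ∈ X, w i ≤ 1) {i : ι} (hi : i ∈ X.erase h) : ¬ Heavy ε w i :=
  not_heavy_of_ne_heavy hε hw hXw hX.1 hX.2.1 (mem_of_mem_erase hi) (ne_of_mem_erase hi)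

/-- `insert a Q` and `Xa.erase a ∪ (Xb.erase b \ Q)` are the two knapsacks made from the
bags `Xa` and `Xb`. -/
theorem exists_split {Xa Xb : Finset ι} {a b : ι} (hε : 0 < ε) (hε₀ : ε ≤ 1 / 100)
    (ha : IsCriticalBag ε p w Xa a) (hb : IsCriticalBag ε p w Xb b)
    (hcls : ⌊p a / ε⌋ = ⌊p b / ε⌋) (hXa : 1 ≤ ∑ i ∈ Xa, p i) (hXb : 1 ≤ ∑ i ∈ Xb, p i)
    (hpa : p a < 2 / 3 - 6 * ε) (hp : ∀ i ∈ Xb, 0 ≤ p i) (hw : ∀ i ∈ Xb, 0 ≤ w i)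
    (hwp : ∀ i ∈ Xb, w i = 0 → p i = 0) :
    ∃ Q ⊆ Xb.erase b, 2 / 3 - ε ≤ p a + ∑ i ∈ Q, p i ∧
      2 / 3 - ε ≤ ∑ i ∈ Xa.erase a, p i + (∑ i ∈ Xb.erase b, p i - ∑ i ∈ Q, p i) ∧
      (Q.card ≤ 1 ∨ ∑ i ∈ Q, w i ≤ (1 - 2 * ε) * ∑ i ∈ Xb.erase b, w i) := by
  obtain ⟨hab, hba⟩ := abs_lt.1 (abs_sub_lt_of_floor_div_eq hε hcls)
  have hLa := ha.one_sub_le_profit_erase hXa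
  have hLb := hb.one_sub_le_profit_erase hXb
  have hpa' := ha.one_third_lt hXa
  have hsmall : ∀ i ∈ Xb.erase b, p i < 2 / 3 - ε - p b := fun i hi => by
    linarith [hb.2.2.2 i hi]
  by_cases hx : ∃ x ∈ Xb.erase b, 2 / 3 - ε ≤ p a + p x
  · obtain ⟨x, hx, hpx⟩ := hx
    refine ⟨{x}, singleton_subset_iff.2 hx, by simpa using hpx, ?_, Or.inl (card_singleton x).le⟩
    rw [sum_singleton]
    linarith [hsmall x hx]
  push Not at hx
  obtain ⟨Q, hQ, hQ₁, hQ₂, hQ₃⟩ := exists_subset_profit_ge_weight_le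
    (c := 2 / 3 - ε - p a) (θ := 1 - 2 * ε)
    (fun i hi => hp i (mem_of_mem_erase hi)) (fun i hi => hw i (mem_of_mem_erase hi))
    (fun i hi => hwp i (mem_of_mem_erase hi)) (fun i hi => by linarith [hx i hi])
    (by linarith : 0 < 2 / 3 - ε - p a) (by linarith) (by nlinarith)
  exact ⟨Q, hQ, by linarith, by linarith, Or.inr hQ₃⟩

end IsCriticalBag

theorem exists_isCriticalBag_or_isLightOrSmall (hε : 0 < ε) (hε₀ : ε ≤ 1 / 100)
    {X : Finset ι} (hp : ∀ i ∈ X, 0 ≤ p i) (hw : ∀ i ∈ X, 0 ≤ w i)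
    (hwp : ∀ i ∈ X, w i = 0 → p i = 0) (hub : ∀ i ∈ X, p i < 2 / 3 - 6 * ε)
    (hXw : ∑ i ∈ X, w i ≤ 1) (hXp : 1 ≤ ∑ i ∈ X, p i) :
    ∃ (h : ι) (S : Finset ι), IsCriticalBag ε p w X h ∨
      S ⊆ X ∧ 2 / 3 - ε ≤ ∑ i ∈ S, p i ∧ IsLightOrSmall ε w S := by
  by_cases hH : ∀ i ∈ X, ¬ Heavy ε w i
  · obtain ⟨S, hSX, hS⟩ :=
      exists_isLightOrSmall_of_forall_not_heavy hε hε₀ hp hw hwp hub hXw hXp hH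
    obtain ⟨h, -⟩ := nonempty_of_sum_ne_zero (by linarith : ∑ i ∈ X, p i ≠ 0)
    exact ⟨h, S, Or.inr ⟨hSX, hS⟩⟩
  push Not at hH
  obtain ⟨h, hh, hH⟩ := hH
  have hε2 : ε ^ 2 < 1 / 2 := by nlinarith
  have hlight : ∀ i ∈ X.erase h, ¬ Heavy ε w i := fun i hi =>
    not_heavy_of_ne_heavy hε2 hw hXw hh hH (mem_of_mem_erase hi) (ne_of_mem_erase hi)
  by_cases hL : 2 / 3 - ε ≤ ∑ i ∈ X.erase h, p i
  · have := add_sum_erase X w hh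
    unfold Heavy at hH
    refine ⟨h, X.erase h, Or.inr ⟨erase_subset _ _, hL, Or.inr ⟨hlight, ?_⟩⟩⟩
    nlinarith
  by_cases hx : ∃ x ∈ X.erase h, 2 / 3 - ε ≤ p h + p x
  · obtain ⟨x, hx, hpx⟩ := hx
    refine ⟨h, {h, x}, Or.inr ⟨insert_subset hh (singleton_subset_iff.2 (mem_of_mem_erase hx)),
      ?_, Or.inl card_le_two⟩⟩
    rwa [sum_pair (ne_of_mem_erase hx).symm]
  push Not at hL hx
  exact ⟨h, ∅, Or.inl ⟨hh, hH, hL, hx⟩⟩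

theorem IsCriticalBag.isProfiledSlack_insert {Xa Xb Q T : Finset ι} {a b t : ι} (hε : 0 < ε)
    (hε₀ : ε ≤ 1 / 100) (ha : IsCriticalBag ε p w Xa a) (hb : IsCriticalBag ε p w Xb b)
    (hw : ∀ i ∈ Xb, 0 ≤ w i) (hXb : ∑ i ∈ Xb, w i ≤ 1) (hQ : Q ⊆ Xb.erase b) (haQ : a ∉ Q)
    (hQp : 2 / 3 - ε ≤ p a + ∑ i ∈ Q, p i)
    (hQw : Q.card ≤ 1 ∨ ∑ i ∈ Q, w i ≤ (1 - 2 * ε) * ∑ i ∈ Xb.erase b, w i)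
    (ht : t ∈ T) (hcls : ⌊p t / ε⌋ = ⌊p a / ε⌋) (hbt : 1 - w b ≤ 1 - w t)
    (hta : 1 - w t ≤ 1 - w a) :
    insert a Q ⊆ Xa ∪ Xb ∧ ∑ i ∈ insert a Q, w i ≤ 1 ∧ 2 / 3 - ε ≤ ∑ i ∈ insert a Q, p i ∧
      IsProfiledSlack ε p w T (insert a Q) := by
  have hL := hb.sum_erase_weight_le hXb
  have hQL : ∑ i ∈ Q, w i ≤ ∑ i ∈ Xb.erase b, w i :=
    sum_le_sum_of_subset_of_nonneg hQ fun i hi _ => hw i (mem_of_mem_erase hi)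
  rw [sum_insert haQ, sum_insert haQ]
  refine ⟨insert_subset (mem_union_left _ ha.1)
    (hQ.trans ((erase_subset _ _).trans subset_union_right)), by linarith, hQp, ?_⟩
  rcases hQw with hQ1 | hQw
  · exact Or.inl (Or.inl ((card_insert_le a Q).trans (by omega)))
  refine Or.inr ⟨a, mem_insert_self a Q, ha.2.1, fun i hi hia => ?_, t, ht, hcls, ?_,
    mul_le_mul_of_nonneg_left hta (by linarith)⟩
  · exact hb.not_heavy (by nlinarith) hw hXb (hQ ((mem_insert.1 hi).resolve_left hia))
  · rw [sum_insert haQ, add_sub_cancel_left]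
    have hL0 : 0 ≤ ∑ i ∈ Xb.erase b, w i := sum_nonneg fun i hi => hw i (mem_of_mem_erase hi)
    calc ∑ i ∈ Q, w i ≤ (1 - 2 * ε) * ∑ i ∈ Xb.erase b, w i := hQw
      _ ≤ (1 - 2 * ε) * (1 - w t) := mul_le_mul_of_nonneg_left (by linarith) (by linarith)
      _ ≤ (1 - ε) * (1 - w t) := by nlinarith

theorem IsCriticalBag.isProfiledSlack_union_sdiff {Xa Xb Q T : Finset ι} {a b : ι} (hε : 0 < ε)
    (hε₀ : ε ≤ 1 / 100) (ha : IsCriticalBag ε p w Xa a) (hb : IsCriticalBag ε p w Xb b)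
    (hwa : ∀ i ∈ Xa, 0 ≤ w i) (hwb : ∀ i ∈ Xb, 0 ≤ w i) (hXa : ∑ i ∈ Xa, w i ≤ 1)
    (hXb : ∑ i ∈ Xb, w i ≤ 1) (hab : Disjoint Xa Xb) (hQ : Q ⊆ Xb.erase b)
    (hQp : 2 / 3 - ε ≤ ∑ i ∈ Xa.erase a, p i + (∑ i ∈ Xb.erase b, p i - ∑ i ∈ Q, p i)) :
    Xa.erase a ∪ (Xb.erase b \ Q) ⊆ Xb ∪ Xa ∧ ∑ i ∈ Xa.erase a ∪ (Xb.erase b \ Q), w i ≤ 1 ∧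
      2 / 3 - ε ≤ ∑ i ∈ Xa.erase a ∪ (Xb.erase b \ Q), p i ∧
      IsProfiledSlack ε p w T (Xa.erase a ∪ (Xb.erase b \ Q)) := by
  have hε2 : ε ^ 2 < 1 / 2 := by nlinarith
  have hdisj : Disjoint (Xa.erase a) (Xb.erase b \ Q) :=
    hab.mono (erase_subset _ _) (sdiff_subset.trans (erase_subset _ _))
  have hsdiff : ∑ i ∈ Xb.erase b \ Q, w i ≤ ∑ i ∈ Xb.erase b, w i :=
    sum_le_sum_of_subset_of_nonneg sdiff_subset fun i hi _ => hwb i (mem_of_mem_erase hi)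
  have hweight : ∑ i ∈ Xa.erase a ∪ (Xb.erase b \ Q), w i ≤ 2 * ε ^ 2 := by
    rw [sum_union hdisj]
    linarith [ha.sum_erase_weight_le_sq hXa, hb.sum_erase_weight_le_sq hXb]
  refine ⟨union_subset ((erase_subset _ _).trans subset_union_right)
    (sdiff_subset.trans ((erase_subset _ _).trans subset_union_left)), by nlinarith,
    by rwa [sum_union hdisj, sum_sdiff_eq_sub hQ], Or.inl (Or.inr ⟨fun i hi => ?_, by nlinarith⟩)⟩
  rcases mem_union.1 hi with hi | hi
  · exact ha.not_heavy hε2 hwa hXa hi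
  · exact hb.not_heavy hε2 hwb hXb (mem_sdiff.1 hi).1

theorem exists_repacking_of_isCriticalBag {κ : Type*} [DecidableEq κ] (hε : 0 < ε)
    (hε₀ : ε ≤ 1 / 100) {X : κ → Finset ι} (hp : ∀ j, ∀ i ∈ X j, 0 ≤ p i)
    (hw : ∀ j, ∀ i ∈ X j, 0 ≤ w i) (hwp : ∀ j, ∀ i ∈ X j, w i = 0 → p i = 0)
    (hub : ∀ j, ∀ i ∈ X j, p i < 2 / 3 - 6 * ε) (hX : Pairwise (Disjoint on X))
    (hXw : ∀ j, ∑ i ∈ X j, w i ≤ 1) (hXp : ∀ j, 1 ≤ ∑ i ∈ X j, p i) {D : Finset κ} {h : κ → ι}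
    (hD : ∀ j ∈ D, IsCriticalBag ε p w (X j) (h j)) :
    ∃ (σ : κ → κ) (B : κ → Finset ι) (T : Finset ι), Involutive σ ∧ (∀ j ∉ D, σ j = j) ∧
      (∀ j ∈ D, B j ⊆ X j ∪ X (σ j) ∧ ∑ i ∈ B j, w i ≤ 1 ∧ 2 / 3 - ε ≤ ∑ i ∈ B j, p i ∧
        IsProfiledSlack ε p w T (B j)) ∧
      (∀ j ∈ D, σ j ≠ j → Disjoint (B j) (B (σ j))) ∧ T ⊆ D.image h ∧
      T.card ≤ (D.image fun j => ⌊p (h j) / ε⌋).card := by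
  obtain ⟨σ, S, hσ, hσD, hSD, hpair⟩ :=
    exists_classwise_pairing (fun j => ⌊p (h j) / ε⌋) (fun j => 1 - w (h j)) D
  obtain ⟨P, hPS, hPcard, hP⟩ :=
    exists_classwise_argmin (fun j => ⌊p (h j) / ε⌋) (fun j => 1 - w (h j)) S
  choose! Q hQL hQ using fun a (ha : a ∈ S) =>
    have haD := hD a (hSD ha)
    haD.exists_split hε hε₀ (hD _ (hpair a (hSD ha)).1) (hpair a (hSD ha)).2.1.symm (hXp a)
      (hXp _) (hub a _ haD.1) (hp _) (hw _) (hwp _)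
  set B : κ → Finset ι := fun j => if j ∈ S then insert (h j) (Q j)
    else (X (σ j)).erase (h (σ j)) ∪ ((X j).erase (h j) \ Q (σ j))
  have hBS : ∀ j ∈ S, B j = insert (h j) (Q j) := fun j hj => if_pos hj
  have hBS' : ∀ j ∉ S, B j = (X (σ j)).erase (h (σ j)) ∪ ((X j).erase (h j) \ Q (σ j)) :=
    fun j hj => if_neg hj
  have hh_notMem : ∀ j ∈ D, ∀ k, h j ∉ (X k).erase (h k) := by
    intro j hj k hk
    by_cases hkj : k = j
    · subst hkj; exact notMem_erase _ _ hk
    · exact disjoint_left.1 (hX (Ne.symm hkj)) (hD j hj).1 (mem_of_mem_erase hk)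
  have hdisj : ∀ a ∈ S, σ a ≠ a → Disjoint (B a) (B (σ a)) := by
    intro a ha hne
    obtain ⟨-, -, -, hin, -⟩ := hpair a (hSD ha)
    rw [hBS a ha, hBS' (σ a) (hin ha hne), hσ a]
    exact disjoint_insert_union_sdiff (hh_notMem a (hSD ha) a) (hh_notMem a (hSD ha) (σ a))
      (hQL a ha)      ((hX hne.symm).mono (erase_subset _ _) (erase_subset _ _))
  refine ⟨σ, B, P.image h, hσ, hσD, fun j hj => ?_, fun j hj hne => ?_,
    image_subset_image (hPS.trans hSD),
    card_image_le.trans (hPcard.trans (card_le_card (image_subset_image hSD)))⟩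
  · obtain ⟨hσj, -, hout, -, hle⟩ := hpair j hj
    by_cases hjS : j ∈ S
    · obtain ⟨t, htP, htcls, htj⟩ := hP j hjS
      rw [hBS j hjS]
      exact (hD j hj).isProfiledSlack_insert hε hε₀ (hD _ hσj) (hw _) (hXw _) (hQL j hjS)
        (fun hh => hh_notMem j hj (σ j) (hQL j hjS hh)) (hQ j hjS).1 (hQ j hjS).2.2
        (mem_image_of_mem h htP) htcls (hle hjS t (hPS htP) htcls) htj
    · obtain ⟨hσS, hσne⟩ := hout hjS
      have hQj := hQL (σ j) hσS
      have hQp := (hQ (σ j) hσS).2.1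
      rw [hσ j] at hQj hQp
      rw [hBS' j hjS]
      exact (hD _ hσj).isProfiledSlack_union_sdiff hε hε₀ (hD j hj) (hw _) (hw _) (hXw _) (hXw _)
        (hX hσne) hQj hQp
  · by_cases hjS : j ∈ S
    · exact hdisj j hjS hne
    · obtain ⟨hσS, hσne⟩ := (hpair j hj).2.2.1 hjS
      simpa [hσ j, disjoint_comm] using hdisj (σ j) hσS (by rwa [hσ j, ne_comm])

end Critical

theorem exists_profiledSlack_repacking {ε : ℝ} {p w : ι → ℝ} {κ : Type*} [Fintype κ]
    [DecidableEq κ] (hε : 0 < ε) (hε₀ : ε ≤ 1 / 100) {I : Finset ι} (hp : ∀ i ∈ I, 0 ≤ p i)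
    (hw : ∀ i ∈ I, 0 ≤ w i) (hwp : ∀ i ∈ I, w i = 0 → p i = 0)
    (hub : ∀ i ∈ I, p i < 2 / 3 - 6 * ε) {X : κ → Finset ι} (hXI : ∀ j, X j ⊆ I)
    (hX : Pairwise (Disjoint on X)) (hXw : ∀ j, ∑ i ∈ X j, w i ≤ 1)
    (hXp : ∀ j, 1 ≤ ∑ i ∈ X j, p i) :
    ∃ (A : κ → Finset ι) (T : Finset ι), (∀ j, A j ⊆ I) ∧ Pairwise (Disjoint on A) ∧
      (∀ j, ∑ i ∈ A j, w i ≤ 1) ∧ (∀ j, 2 / 3 - ε ≤ ∑ i ∈ A j, p i) ∧ T ⊆ I ∧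
      (∀ t ∈ T, Heavy ε w t) ∧ (∀ j, IsProfiledSlack ε p w T (A j)) ∧
      (T.card : ℝ) ≤ 2 / ε ^ 2 := by
  classical
  have hpX : ∀ j, ∀ i ∈ X j, 0 ≤ p i := fun j i hi => hp i (hXI j hi)
  have hwX : ∀ j, ∀ i ∈ X j, 0 ≤ w i := fun j i hi => hw i (hXI j hi)
  have hwpX : ∀ j, ∀ i ∈ X j, w i = 0 → p i = 0 := fun j i hi => hwp i (hXI j hi)
  have hubX : ∀ j, ∀ i ∈ X j, p i < 2 / 3 - 6 * ε := fun j i hi => hub i (hXI j hi)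
  choose h S hbag using fun j => exists_isCriticalBag_or_isLightOrSmall hε hε₀ (hpX j)
    (hwX j) (hwpX j) (hubX j) (hXw j) (hXp j)
  set D := univ.filter fun j => IsCriticalBag ε p w (X j) (h j)
  have hD : ∀ j ∈ D, IsCriticalBag ε p w (X j) (h j) := fun j hj => (mem_filter.1 hj).2
  obtain ⟨σ, B, T, hσ, hσD, hB, hBd, hTD, hTcard⟩ :=
    exists_repacking_of_isCriticalBag hε hε₀ hpX hwX hwpX hubX hX hXw hXp hD
  set A := fun j => if j ∈ D then B j else S j
  have hA : ∀ j, A j ⊆ X j ∪ X (σ j) ∧ ∑ i ∈ A j, w i ≤ 1 ∧ 2 / 3 - ε ≤ ∑ i ∈ A j, p i ∧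
      IsProfiledSlack ε p w T (A j) := by
    intro j
    by_cases hj : j ∈ D
    · simpa [A, hj] using hB j hj
    obtain ⟨hSX, hSp, hS⟩ := (hbag j).resolve_left fun hc => hj (mem_filter.2 ⟨mem_univ j, hc⟩)
    simp only [A, hj, if_false]
    exact ⟨hSX.trans subset_union_left,
      (sum_le_sum_of_subset_of_nonneg hSX fun i hi _ => hwX j i hi).trans (hXw j), hSp, Or.inl hS⟩
  have hTh : ∀ t ∈ T, ∃ j ∈ D, h j = t := fun t ht => mem_image.1 (hTD ht)
  refine ⟨A, T, fun j => (hA j).1.trans (union_subset (hXI j) (hXI _)),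
    pairwise_disjoint_of_le_sup_involutive hX hσ (fun j => (hA j).1) fun j hne => ?_,
    fun j => (hA j).2.1, fun j => (hA j).2.2.1, fun t ht => ?_, fun t ht => ?_,
    fun j => (hA j).2.2.2, ?_⟩
  · have hj : j ∈ D := by_contra fun hj => hne (hσD j hj)
    have hσj : σ j ∈ D := by_contra fun hσj => hne ((hσD _ hσj).symm.trans (hσ j))
    simpa [A, hj, hσj] using hBd j hj hne
  · obtain ⟨j, hj, rfl⟩ := hTh t ht
    exact hXI j (hD j hj).1
  · obtain ⟨j, hj, rfl⟩ := hTh t ht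
    exact (hD j hj).2.1
  calc (T.card : ℝ) ≤ (D.image fun j => ⌊p (h j) / ε⌋).card := by exact_mod_cast hTcard
    _ ≤ 2 / 3 / ε + 1 := card_image_floor_div_le hε (by norm_num) fun j hj =>
        ⟨hpX j _ (hD j hj).1, by linarith [hubX j _ (hD j hj).1]⟩
    _ ≤ 2 / ε ^ 2 := by
        rw [div_add_one hε.ne', div_le_div_iff₀ hε (by positivity)]
        nlinarith

/-- Lemma 4.4: for sufficiently small `ε`, any identical-capacity BMKP instance
admitting a feasible solution of value at least 1 admits a slack feasible solution
of value at least `2/3 - ε` together with a profile `T` of heavy items with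
`|T| ≤ 2/ε²`. -/
theorem stmt7 : ∃ ε₀ : ℝ, 0 < ε₀ ∧
    ∀ ε : ℝ, 0 < ε → ε ≤ ε₀ →
    ∀ (ι : Type u) (p w : ι → ℝ) (I : Finset ι) (m : ℕ) (X : Fin m → Finset ι),
      (∀ i ∈ I, 0 ≤ p i) → (∀ i ∈ I, 0 ≤ w i) →
      (∀ i ∈ I, w i = 0 → p i = 0) →
      (∀ i ∈ I, p i < 2/3 - 6 * ε) →
      (∀ i ∈ I, Heavy ε w i → Expensive ε p i) →
      (∀ j, X j ⊆ I) → (∀ j j', j ≠ j' → Disjoint (X j) (X j')) →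
      (∀ j, ∑ i ∈ X j, w i ≤ 1) → (∀ j, 1 ≤ ∑ i ∈ X j, p i) →
      ∃ A : Fin m → Finset ι,
        (∀ j, A j ⊆ I) ∧ (∀ j j', j ≠ j' → Disjoint (A j) (A j')) ∧
        (∀ j, ∑ i ∈ A j, w i ≤ 1) ∧
        Slack ε w A ∧
        (∀ j, 2/3 - ε ≤ ∑ i ∈ A j, p i) ∧
        ∃ T ⊆ I, (∀ t ∈ T, Heavy ε w t) ∧ IsProfile ε p w A T ∧
          (T.card : ℝ) ≤ 2 / ε ^ 2 := by
  refine ⟨1 / 100, by norm_num, fun ε hε hε₀ ι p w I m X hp hw hwp hub _ hXI hX hXw hXp => ?_⟩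
  obtain ⟨A, T, hAI, hA, hAw, hAp, hTI, hTH, hAT, hT⟩ :=
    exists_profiledSlack_repacking hε hε₀ hp hw hwp hub hXI hX hXw hXp
  exact ⟨A, hAI, hA, hAw, slack_of_forall_isProfiledSlack hAT, hAp, T, hTI, hTH,
    isProfile_of_forall_isProfiledSlack hAT, hT⟩
end

section
/- There exists a constant ε₀ > 0 such that the following holds for every ε ∈ (0, ε₀]. Let I be a finite set of items where each item i has profit p(i) ≥ 0 and weight w(i) ≥ 0, with p(i) = 0 whenever w(i) = 0, p(i) < 2/3 − 6ε for every i ∈ I, and p(i) ≥ ε whenever w(i) ≥ 1 − ε². Let T ⊆ I be a set of heavy items. For a heavy item h, let T(h) = { t ∈ T : ⌊p(t)/ε⌋ = ⌊p(h)/ε⌋ and w(t) ≥ w(h) }; when T(h) ≠ ∅ define the label weight w̃(h) = min{ w(t) : t ∈ T(h) }, and say two heavy items h₁, h₂ have the same type if ⌊p(h₁)/ε⌋ = ⌊p(h₂)/ε⌋ and T(h₁), T(h₂) are nonempty with w̃(h₁) = w̃(h₂). Suppose there exists a slack feasible solution (J_1, …, J_m) with p(J_j) ≥ 2/3 − ε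 for all j that has T as a profile. Then there exists a slack feasible solution (I_1, …, I_m) satisfying: (i) p(I_j) ≥ 2/3 − 2ε for every j; (ii) for every j and every critical heavy item h ∈ I_j, T(h) ≠ ∅ and w(I_j) − w(h) ≤ (1 − ε)(1 − w̃(h)); (iii) there is no critical heavy item h and non-critical heavy item h′ of the same type with w(h) < w(h′). -/
open scoped Classical

universe u

variable {ι : Type u}

/-- `T(h)`: elements of the profile `T` with the same rounded profit as `h` and
weight at least `w h`. -/
noncomputable def TSet (ε : ℝ) (p w : ι → ℝ) (T : Finset ι) (h : ι) : Finset ι :=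
  T.filter (fun t => ⌊p t / ε⌋ = ⌊p h / ε⌋ ∧ w h ≤ w t)

/-- The label weight `w̃(h)` of a heavy item: the minimum weight of an element of
`T(h)` (via `sInf`; irrelevant when `T(h) = ∅`). -/
noncomputable def labelW (ε : ℝ) (p w : ι → ℝ) (T : Finset ι) (h : ι) : ℝ :=
  sInf {x : ℝ | ∃ t ∈ TSet ε p w T h, w t = x}

/-- Two heavy items have the same type: equal rounded profits, both `T(·)`
nonempty, and equal label weights. -/
def SameType (ε : ℝ) (p w : ι → ℝ) (T : Finset ι) (h₁ h₂ : ι) : Prop :=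
  ⌊p h₁ / ε⌋ = ⌊p h₂ / ε⌋ ∧ (TSet ε p w T h₁).Nonempty ∧
    (TSet ε p w T h₂).Nonempty ∧ labelW ε p w T h₁ = labelW ε p w T h₂

/-- An item is critical in a solution if it is heavy or expensive and lies in a
knapsack with at least three items. -/
def Critical (ε : ℝ) (p w : ι → ℝ) {m : ℕ} (A : Fin m → Finset ι) (i : ι) : Prop :=
  (Heavy ε w i ∨ Expensive ε p i) ∧ ∃ j, i ∈ A j ∧ 3 ≤ (A j).card

/-!
Start from `J`, which satisfies the label-weight bound because `T` is a profile, and consider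
all solutions obtained from `J` by a permutation of the items that moves only heavy items and
preserves `⌊p / ε⌋`, and that stay feasible, slack and label-weight bounded. A knapsack holds at
most one heavy item, so each knapsack of such a solution loses less than `ε` profit. Take one
maximising the total weight of heavy items in knapsacks with at least three items. If a critical
heavy `h` and a heavier non-critical heavy `h'` had the same type, exchanging them would keep
every invariant (their label weights coincide, and `h'` sits in a knapsack with at most two
items) and increase that total.
-/

open Finset

section Swap

variable {α M : Type*} [DecidableEq α]

lemma Equiv.swap_apply_mem {S : Set α} {a b x : α} (ha : a ∈ S) (hb : b ∈ S) (hx : x ∈ S) :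
    Equiv.swap a b x ∈ S := by
  rw [Equiv.swap_apply_def]
  split_ifs <;> assumption

lemma Finset.map_swap_of_notMem {s : Finset α} {a b : α} (ha : a ∉ s) (hb : b ∉ s) :
    s.map (Equiv.swap a b).toEmbedding = s := by
  ext x
  rw [mem_map_equiv, Equiv.symm_swap, Equiv.swap_apply_def]
  split_ifs with hxa hxb
  · subst hxa; exact iff_of_false hb ha
  · subst hxb; exact iff_of_false ha hb
  · rfl

lemma Finset.sum_map_swap [AddCommGroup M] {s : Finset α} {a b : α} (f : α → M) (ha : a ∈ s)
    (hb : b ∉ s) :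
    ∑ i ∈ s.map (Equiv.swap a b).toEmbedding, f i = ∑ i ∈ s, f i - f a + f b := by
  have hfix : ∑ i ∈ s.erase a, f (Equiv.swap a b i) = ∑ i ∈ s.erase a, f i :=
    sum_congr rfl fun i hi => by
      rw [Equiv.swap_apply_of_ne_of_ne (ne_of_mem_erase hi)
        (fun hib : i = b => hb (hib ▸ mem_of_mem_erase hi))]
  rw [sum_map, ← add_sum_erase s _ ha, ← add_sum_erase s f ha]
  simp only [Equiv.coe_toEmbedding, Equiv.swap_apply_left, hfix]
  abel

lemma Finset.sum_map_swap_le [AddCommGroup M] [PartialOrder M] [IsOrderedAddMonoid M]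
    {s : Finset α} {a b : α} (f : α → M) (ha : a ∉ s) (hab : f a ≤ f b) :
    ∑ i ∈ s.map (Equiv.swap a b).toEmbedding, f i ≤ ∑ i ∈ s, f i := by
  by_cases hb : b ∈ s
  · rw [Equiv.swap_comm, sum_map_swap f hb ha, sub_add_eq_add_sub, sub_le_iff_le_add]
    gcongr
  · rw [map_swap_of_notMem ha hb]

end Swap

section Exchange

variable {ε : ℝ} {p w : ι → ℝ}

lemma sub_lt_of_floor_div_eq_floor_div {x y : ℝ} (hε : 0 < ε) (h : ⌊x / ε⌋ = ⌊y / ε⌋) :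
    y - ε < x := by
  have hxy := Int.abs_sub_lt_one_of_floor_eq_floor h
  rw [← sub_div, abs_div, abs_of_pos hε, div_lt_one hε] at hxy
  linarith [neg_abs_le (x - y)]

lemma Heavy.eq_of_sum_le_one {s : Finset ι} {a b : ι} (hε : ε ^ 2 < 1 / 2) (hw : ∀ i ∈ s, 0 ≤ w i)
    (hs : ∑ i ∈ s, w i ≤ 1) (ha : a ∈ s) (hb : b ∈ s) (hha : Heavy ε w a)
    (hhb : Heavy ε w b) : a = b := by
  by_contra hab
  have := add_le_sum hw ha hb hab
  unfold Heavy at hha hhb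
  linarith

lemma le_labelW {T : Finset ι} {h : ι} (hT : (TSet ε p w T h).Nonempty) :
    w h ≤ labelW ε p w T h :=
  le_csInf (hT.elim fun t ht => ⟨w t, t, ht, rfl⟩) fun _ ⟨_, ht, hx⟩ =>
    hx ▸ (mem_filter.1 ht).2.2

lemma labelW_le {T : Finset ι} {h t : ι} (ht : t ∈ TSet ε p w T h) : labelW ε p w T h ≤ w t :=
  csInf_le (((TSet ε p w T h).image w).bddBelow.mono fun _ ⟨_, ht, hx⟩ =>
    hx ▸ mem_image_of_mem w ht) ⟨t, ht, rfl⟩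

def IsHeavyRelabeling (ε : ℝ) (p w : ι → ℝ) (σ : Equiv.Perm ι) : Prop :=
  (∀ i, σ i ≠ i → Heavy ε w i) ∧ ∀ i, ⌊p (σ i) / ε⌋ = ⌊p i / ε⌋

lemma IsHeavyRelabeling.refl : IsHeavyRelabeling ε p w (Equiv.refl ι) :=
  ⟨fun _ h => absurd rfl h, fun _ => rfl⟩

lemma IsHeavyRelabeling.trans_swap {σ : Equiv.Perm ι} {h h' : ι} (hσ : IsHeavyRelabeling ε p w σ)
    (hh : Heavy ε w h) (hh' : Heavy ε w h') (hfloor : ⌊p h / ε⌋ = ⌊p h' / ε⌋) :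
    IsHeavyRelabeling ε p w (σ.trans (Equiv.swap h h')) := by
  have hswap : ∀ x, ⌊p (Equiv.swap h h' x) / ε⌋ = ⌊p x / ε⌋ := fun x => by
    rw [Equiv.swap_apply_def]
    split_ifs with hxh hxh'
    · rw [hxh, hfloor]
    · rw [hxh', hfloor]
    · rfl
  refine ⟨fun i hi => ?_, fun i => (hswap (σ i)).trans (hσ.2 i)⟩
  by_cases hσi : σ i = i
  · rw [Equiv.trans_apply, hσi, Equiv.swap_apply_def] at hi
    split_ifs at hi with hih hih'
    · exact hih ▸ hh
    · exact hih' ▸ hh'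
    · exact absurd rfl hi
  · exact hσ.1 i hσi

lemma IsHeavyRelabeling.sum_sub_le_sum_map {σ : Equiv.Perm ι} {s : Finset ι}
    (hσ : IsHeavyRelabeling ε p w σ) (hε : 0 < ε) (hε₂ : ε ^ 2 < 1 / 2)
    (hw : ∀ i ∈ s, 0 ≤ w i) (hs : ∑ i ∈ s, w i ≤ 1) :
    ∑ i ∈ s, p i - ε ≤ ∑ i ∈ s.map σ.toEmbedding, p i := by
  rw [sum_map]
  by_cases hmoved : ∃ a ∈ s, σ a ≠ a
  · obtain ⟨a, ha, hσa⟩ := hmoved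
    have hsum : ∑ i ∈ s, (p (σ i) - p i) = p (σ a) - p a :=
      sum_eq_single_of_mem a ha fun b hb hba => by
        have : σ b = b := by
          by_contra hσb
          exact hba (Heavy.eq_of_sum_le_one hε₂ hw hs hb ha (hσ.1 b hσb) (hσ.1 a hσa))
        rw [this, sub_self]
    rw [sum_sub_distrib] at hsum
    have := sub_lt_of_floor_div_eq_floor_div hε (hσ.2 a)
    simp only [Equiv.coe_toEmbedding]
    linarith
  · push Not at hmoved
    simp only [Equiv.coe_toEmbedding]
    rw [sum_congr rfl fun i hi => congrArg p (hmoved i hi)]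
    linarith

lemma sum_map_swap_le_one_and_sub_le {s : Finset ι} {h h' : ι} {L : ℝ} (hε₀ : 0 ≤ ε) (hε₁ : ε < 1)
    (hw : ∀ i ∈ s, 0 ≤ w i) (hh : h ∈ s) (hh' : h' ∉ s)
    (hbound : ∑ i ∈ s, w i - w h ≤ (1 - ε) * (1 - L)) (hL : w h' ≤ L) :
    ∑ i ∈ s.map (Equiv.swap h h').toEmbedding, w i ≤ 1 ∧
      ∑ i ∈ s.map (Equiv.swap h h').toEmbedding, w i - w h' ≤ (1 - ε) * (1 - L) := by
  rw [sum_map_swap w hh hh']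
  have hrest : 0 ≤ ∑ i ∈ s, w i - w h := sub_nonneg.2 (single_le_sum hw hh)
  have hL1 : 0 ≤ 1 - L := nonneg_of_mul_nonneg_right (hrest.trans hbound) (sub_pos.2 hε₁)
  constructor
  · nlinarith [mul_nonneg hε₀ hL1]
  · linarith

def LabelBound (ε : ℝ) (p w : ι → ℝ) (T : Finset ι) {m : ℕ} (A : Fin m → Finset ι) : Prop :=
  ∀ j, ∀ h ∈ A j, Heavy ε w h → 3 ≤ (A j).card →
    (TSet ε p w T h).Nonempty ∧ (∑ i ∈ A j, w i) - w h ≤ (1 - ε) * (1 - labelW ε p w T h)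

lemma IsProfile.labelBound {m : ℕ} {J : Fin m → Finset ι} {T : Finset ι} (hε : ε < 1)
    (hJ : IsProfile ε p w J T) : LabelBound ε p w T J := by
  intro j h hj hh hcard
  obtain ⟨t, htT, hfloor, hbound, hle⟩ := hJ j h hj hh hcard
  have hε' : 0 < 1 - ε := sub_pos.2 hε
  have ht : t ∈ TSet ε p w T h :=
    mem_filter.2 ⟨htT, hfloor, by linarith [le_of_mul_le_mul_left hle hε']⟩
  exact ⟨⟨t, ht⟩, hbound.trans <|
    mul_le_mul_of_nonneg_left (sub_le_sub_left (labelW_le ht) 1) hε'.le⟩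

structure IsAdmissible (ε : ℝ) (p w : ι → ℝ) (I T : Finset ι) {m : ℕ}
    (J A : Fin m → Finset ι) : Prop where
  subset : ∀ j, A j ⊆ I
  pairwise_disjoint : ∀ j k, j ≠ k → Disjoint (A j) (A k)
  sum_weight_le_one : ∀ j, ∑ i ∈ A j, w i ≤ 1
  slack : Slack ε w A
  labelBound : LabelBound ε p w T A
  relabeling : ∃ σ, IsHeavyRelabeling ε p w σ ∧ ∀ j, A j = (J j).map σ.toEmbedding

lemma IsAdmissible.sum_profit_ge {I T : Finset ι} {m : ℕ} {J A : Fin m → Finset ι}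
    (hA : IsAdmissible ε p w I T J A) (hε : 0 < ε) (hε₂ : ε ^ 2 < 1 / 2)
    (hw : ∀ i ∈ I, 0 ≤ w i) (hJI : ∀ j, J j ⊆ I) (hJw : ∀ j, ∑ i ∈ J j, w i ≤ 1)
    (hJp : ∀ j, 2 / 3 - ε ≤ ∑ i ∈ J j, p i) (j : Fin m) :
    2 / 3 - 2 * ε ≤ ∑ i ∈ A j, p i := by
  obtain ⟨σ, hσ, hJA⟩ := hA.relabeling
  rw [hJA j]
  linarith [hJp j, hσ.sum_sub_le_sum_map hε hε₂ (fun i hi => hw i (hJI j hi)) (hJw j)]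

lemma map_swap_eq_self_of_ne {m : ℕ} {A : Fin m → Finset ι} {j k : Fin m} {h h' : ι}
    (hdisj : ∀ j k, j ≠ k → Disjoint (A j) (A k)) (hj : h ∈ A j) (hkj : k ≠ j) (h'k : h' ∉ A k) :
    (A k).map (Equiv.swap h h').toEmbedding = A k :=
  map_swap_of_notMem (fun hk => disjoint_left.1 (hdisj k j hkj) hk hj) h'k

lemma IsAdmissible.map_swap {I T : Finset ι} {m : ℕ} {J A : Fin m → Finset ι} {j : Fin m}
    {h h' : ι} (hA : IsAdmissible ε p w I T J A) (hε₀ : 0 ≤ ε) (hε₁ : ε < 1)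
    (hε₂ : ε ^ 2 < 1 / 2) (hw : ∀ i ∈ I, 0 ≤ w i) (hj : h ∈ A j) (hcard : 3 ≤ (A j).card)
    (hh : Heavy ε w h) (h'I : h' ∈ I) (hh' : Heavy ε w h')
    (h'small : ∀ k, h' ∈ A k → (A k).card < 3) (htype : SameType ε p w T h h')
    (hle : w h ≤ w h') :
    IsAdmissible ε p w I T J (fun k => (A k).map (Equiv.swap h h').toEmbedding) := by
  set A' := fun k => (A k).map (Equiv.swap h h').toEmbedding
  have h'j : h' ∉ A j := fun hm => (h'small j hm).not_ge hcard
  have hunmoved : ∀ k, k ≠ j → 3 ≤ (A k).card → A' k = A k := fun k hkj hk3 =>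
    map_swap_eq_self_of_ne hA.pairwise_disjoint hj hkj fun hm => (h'small k hm).not_ge hk3
  have hcard' : ∀ k, (A' k).card = (A k).card := fun k => card_map _
  have hsub' : ∀ k, A' k ⊆ I := fun k x hx => by
    obtain ⟨y, hy, rfl⟩ := mem_map.1 hx
    exact Equiv.swap_apply_mem (hA.subset j hj) h'I (hA.subset k hy)
  -- `h` and `h'` have the same label weight, so the bound for `h` transfers to `h'`.
  obtain ⟨-, hbound⟩ := hA.labelBound j h hj hh hcard
  rw [htype.2.2.2] at hbound
  have hlabel := le_labelW htype.2.2.1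
  obtain ⟨hwj, hboundj⟩ := sum_map_swap_le_one_and_sub_le hε₀ hε₁
    (fun i hi => hw i (hA.subset j hi)) hj h'j hbound hlabel
  have h'mem : h' ∈ A' j := mem_map_equiv.2 (by simpa using hj)
  refine ⟨hsub', fun k l hkl => (disjoint_map _).2 (hA.pairwise_disjoint k l hkl),
    fun k => ?_, fun k hk3 => ?_, fun k x hx hxh hk3 => ?_, ?_⟩
  · rcases eq_or_ne k j with rfl | hkj
    · exact hwj
    · exact (sum_map_swap_le w (fun hk => disjoint_left.1 (hA.pairwise_disjoint k j hkj) hk hj)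
        hle).trans (hA.sum_weight_le_one k)
  · rw [hcard'] at hk3
    rcases eq_or_ne k j with rfl | hkj
    · refine Or.inr ⟨⟨h', h'mem, hh', hboundj.trans ?_⟩, fun hlight => hlight.1 h' h'mem hh'⟩
      exact mul_le_mul_of_nonneg_left (by linarith) (by linarith)
    · rw [hunmoved k hkj hk3]
      exact hA.slack k hk3
  · rw [hcard'] at hk3
    rcases eq_or_ne k j with rfl | hkj
    · obtain rfl : x = h' :=
        Heavy.eq_of_sum_le_one hε₂ (fun i hi => hw i (hsub' k hi)) hwj hx h'mem hxh hh'
      exact ⟨htype.2.2.1, hboundj⟩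
    · rw [hunmoved k hkj hk3] at hx ⊢
      exact hA.labelBound k x hx hxh hk3
  · obtain ⟨σ, hσ, hJA⟩ := hA.relabeling
    refine ⟨σ.trans (Equiv.swap h h'), hσ.trans_swap hh hh' htype.1, fun k => ?_⟩
    show (A k).map _ = _
    rw [hJA k, map_map, Equiv.trans_toEmbedding]

noncomputable def largeHeavyWeight (ε : ℝ) (w : ι → ℝ) (s : Finset ι) : ℝ :=
  if 3 ≤ s.card then ∑ i ∈ s, if Heavy ε w i then w i else 0 else 0

noncomputable def criticalHeavyWeight (ε : ℝ) (w : ι → ℝ) {m : ℕ} (A : Fin m → Finset ι) : ℝ :=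
  ∑ j, largeHeavyWeight ε w (A j)

lemma criticalHeavyWeight_lt_map_swap {m : ℕ} {A : Fin m → Finset ι} {j : Fin m} {h h' : ι}
    (hdisj : ∀ j k, j ≠ k → Disjoint (A j) (A k)) (hj : h ∈ A j) (hcard : 3 ≤ (A j).card)
    (hh : Heavy ε w h) (hh' : Heavy ε w h') (h'small : ∀ k, h' ∈ A k → (A k).card < 3)
    (hlt : w h < w h') :
    criticalHeavyWeight ε w A <
      criticalHeavyWeight ε w (fun k => (A k).map (Equiv.swap h h').toEmbedding) := by
  have h'j : h' ∉ A j := fun hm => (h'small j hm).not_ge hcard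
  have hgain : largeHeavyWeight ε w (A j) <
      largeHeavyWeight ε w ((A j).map (Equiv.swap h h').toEmbedding) := by
    rw [largeHeavyWeight, largeHeavyWeight, card_map, if_pos hcard, if_pos hcard,
      sum_map_swap _ hj h'j]
    simp only [hh, hh', if_true]
    linarith
  refine sum_lt_sum (fun k _ => ?_) ⟨j, mem_univ j, hgain⟩
  rcases eq_or_ne k j with rfl | hkj
  · exact hgain.le
  by_cases hk3 : 3 ≤ (A k).card
  · exact (congrArg (largeHeavyWeight ε w)
      (map_swap_eq_self_of_ne hdisj hj hkj fun hm => (h'small k hm).not_ge hk3)).ge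
  · simp only [largeHeavyWeight, card_map, hk3, if_false, le_refl]

end Exchange

/-- Lemma 4.6: given a slack solution of value at least `2/3 - ε` with profile `T`,
there is a slack solution of value at least `2/3 - 2ε` such that every critical
heavy item `h` in a knapsack `A j` satisfies
`w(A j) - w h ≤ (1-ε)(1 - w̃(h))`, and within each type every critical heavy item
is at least as heavy as every non-critical heavy item. -/
theorem stmt8 : ∃ ε₀ : ℝ, 0 < ε₀ ∧
    ∀ ε : ℝ, 0 < ε → ε ≤ ε₀ →
    ∀ (ι : Type u) (p w : ι → ℝ) (I : Finset ι) (m : ℕ)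
      (T : Finset ι) (J : Fin m → Finset ι),
      (∀ i ∈ I, 0 ≤ p i) → (∀ i ∈ I, 0 ≤ w i) →
      (∀ i ∈ I, w i = 0 → p i = 0) →
      (∀ i ∈ I, p i < 2/3 - 6 * ε) →
      (∀ i ∈ I, Heavy ε w i → Expensive ε p i) →
      T ⊆ I → (∀ t ∈ T, Heavy ε w t) →
      (∀ j, J j ⊆ I) → (∀ j j', j ≠ j' → Disjoint (J j) (J j')) →
      (∀ j, ∑ i ∈ J j, w i ≤ 1) →
      Slack ε w J →
      (∀ j, 2/3 - ε ≤ ∑ i ∈ J j, p i) →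
      IsProfile ε p w J T →
      ∃ A : Fin m → Finset ι,
        (∀ j, A j ⊆ I) ∧ (∀ j j', j ≠ j' → Disjoint (A j) (A j')) ∧
        (∀ j, ∑ i ∈ A j, w i ≤ 1) ∧ Slack ε w A ∧
        (∀ j, 2/3 - 2 * ε ≤ ∑ i ∈ A j, p i) ∧
        (∀ j : Fin m, ∀ h ∈ A j, Heavy ε w h → 3 ≤ (A j).card →
          (TSet ε p w T h).Nonempty ∧
          (∑ i ∈ A j, w i) - w h ≤ (1 - ε) * (1 - labelW ε p w T h)) ∧
        (¬ ∃ h h', Heavy ε w h ∧ Critical ε p w A h ∧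
          h' ∈ I ∧ Heavy ε w h' ∧ ¬ Critical ε p w A h' ∧
          SameType ε p w T h h' ∧ w h < w h') := by
  refine ⟨1 / 2, by norm_num, fun ε hε hεhalf ι p w I m T J _ hw _ _ _ _ _ hJI hJdisj hJw hJslack
    hJp hprof => ?_⟩
  have hε₁ : ε < 1 := by linarith
  have hεsq : ε ^ 2 < 1 / 2 := by nlinarith
  have hJ : IsAdmissible ε p w I T J J :=
    ⟨hJI, hJdisj, hJw, hJslack, hprof.labelBound hε₁, Equiv.refl ι, .refl, fun _ => map_refl.symm⟩
  have hfin : {A : Fin m → Finset ι | IsAdmissible ε p w I T J A}.Finite :=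
    (Set.Finite.pi fun _ => I.powerset.finite_toSet).subset fun A hA k _ =>
      mem_powerset.2 (hA.subset k)
  obtain ⟨A, hA, hmax⟩ := hfin.exists_maximalFor (criticalHeavyWeight ε w) _ ⟨J, hJ⟩
  refine ⟨A, hA.subset, hA.pairwise_disjoint, hA.sum_weight_le_one, hA.slack,
    hA.sum_profit_ge hε hεsq hw hJI hJw hJp, hA.labelBound, ?_⟩
  rintro ⟨h, h', hh, ⟨-, j, hj, hcard⟩, h'I, hh', h'noncrit, htype, hlt⟩
  have h'small : ∀ k, h' ∈ A k → (A k).card < 3 := fun k hk =>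
    not_le.1 fun hc => h'noncrit ⟨Or.inl hh', k, hk, hc⟩
  have hgain := criticalHeavyWeight_lt_map_swap hA.pairwise_disjoint hj hcard hh hh' h'small hlt
  exact hgain.not_ge
    (hmax (hA.map_swap hε.le hε₁ hεsq hw hj hcard hh h'I hh' h'small htype hlt.le) hgain.le)
end

section
/- Let 0 < ε ≤ 1/2 with 1/ε a positive integer. Let I be a finite set of items where each item i has profit p(i) ≥ 0 and weight w(i) ≥ 0; call an item expensive if p(i) ≥ ε, and assume every expensive item has w(i) > 0. Let B_1, …, B_m > 0 be knapsack capacities. Define: for each expensive item i, w̃(i) = ε²·(1+ε²)^v where v is the smallest integer with w(i) ≤ ε²·(1+ε²)^v, and p̃(i) = ε·(1+ε)^u where u is the largest integer with p(i) ≥ ε·(1+ε)^u; for each non-expensive item i, w̃(i) = w(i) and p̃(i) = p(i); and for each j, B̃_j = (1+ε)^{t+1} where t is the smallest integer with B_j ≤ (1+ε)^t. Suppose (I_1, …, I_m) are pairwise disjoint sets of items with w(I_j) ≤ B_j, p(I_j) ≥ 1, and at most 1/ε expensive items in I_j, for every j. Then for every j, w̃(I_j) ≤ B̃_j and p̃(I_j)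 ≥ 1 − ε, where w̃(S) = Σ_{i∈S} w̃(i) and p̃(S) = Σ_{i∈S} p̃(i). -/
/-!
Rounding a positive quantity up (resp. down) to the nearest point of a geometric grid with ratio
`r` changes it by a factor less than `r`. Hence every rounded weight is at most `(1 + ε²)` times
the true one, and every true profit at most `(1 + ε)` times the rounded one. A load of weight at
most `B ≤ (1 + ε)^t` therefore rounds to at most `(1 + ε²)(1 + ε)^t ≤ (1 + ε)^(t+1)`, and a
profit of at least `1` rounds to at least `1 / (1 + ε) ≥ 1 - ε`.
-/

open Finset

section GeometricRounding

variable {r c x : ℝ}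

lemma mul_zpow_lt_mul_of_minimal (hr : 0 < r) {v : ℤ}
    (hmin : ∀ v' : ℤ, x ≤ c * r ^ v' → v ≤ v') : c * r ^ v < r * x := by
  have hbelow : c * r ^ (v - 1) < x := by
    by_contra! h
    have := hmin (v - 1) h
    omega
  calc c * r ^ v = r * (c * r ^ (v - 1)) := by
        rw [← sub_add_cancel v 1, zpow_add_one₀ hr.ne', add_sub_cancel_right]; ring
    _ < r * x := mul_lt_mul_of_pos_left hbelow hr

lemma lt_mul_mul_zpow_of_maximal (hr : 0 < r) {u : ℤ}
    (hmax : ∀ u' : ℤ, c * r ^ u' ≤ x → u' ≤ u) : x < r * (c * r ^ u) := by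
  have habove : x < c * r ^ (u + 1) := by
    by_contra! h
    have := hmax (u + 1) h
    omega
  calc x < c * r ^ (u + 1) := habove
    _ = r * (c * r ^ u) := by rw [zpow_add_one₀ hr.ne']; ring

lemma mul_le_zpow_add_one {a B : ℝ} {t : ℤ} (ha : 0 ≤ a) (har : a ≤ r) (hr : 0 < r)
    (hB : B ≤ r ^ t) : a * B ≤ r ^ (t + 1) :=
  calc a * B ≤ a * r ^ t := mul_le_mul_of_nonneg_left hB ha
    _ ≤ r * r ^ t := mul_le_mul_of_nonneg_right har (zpow_pos hr t).le
    _ = r ^ (t + 1) := by rw [zpow_add_one₀ hr.ne', mul_comm]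

end GeometricRounding

section ItemRounding

variable {ε p w wt pt : ℝ}

lemma rounded_weight_le (hw : 0 ≤ w)
    (hexp : ε ≤ p → ∃ v : ℤ, wt = ε ^ 2 * (1 + ε ^ 2) ^ v ∧ w ≤ ε ^ 2 * (1 + ε ^ 2) ^ v ∧
        ∀ v' : ℤ, w ≤ ε ^ 2 * (1 + ε ^ 2) ^ v' → v ≤ v')
    (hcheap : p < ε → wt = w) : wt ≤ (1 + ε ^ 2) * w := by
  rcases lt_or_ge p ε with hlt | hge
  · rw [hcheap hlt]
    nlinarith [sq_nonneg ε]
  · obtain ⟨v, rfl, -, hmin⟩ := hexp hge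
    exact (mul_zpow_lt_mul_of_minimal (by positivity) hmin).le

lemma profit_le_rounded (hε : 0 ≤ ε) (hp : 0 ≤ p)
    (hexp : ε ≤ p → ∃ u : ℤ, pt = ε * (1 + ε) ^ u ∧ ε * (1 + ε) ^ u ≤ p ∧
        ∀ u' : ℤ, ε * (1 + ε) ^ u' ≤ p → u' ≤ u)
    (hcheap : p < ε → pt = p) : p ≤ (1 + ε) * pt := by
  rcases lt_or_ge p ε with hlt | hge
  · rw [hcheap hlt]
    nlinarith
  · obtain ⟨u, rfl, -, hmax⟩ := hexp hge
    exact (lt_mul_mul_zpow_of_maximal (by positivity) hmax).le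

end ItemRounding

theorem stmt10_general {ι : Type*} (ε : ℝ) (hε0 : 0 < ε) (hε2 : ε ≤ 1/2)
    (I : Finset ι) (p w : ι → ℝ)
    (hp : ∀ i ∈ I, 0 ≤ p i) (hw : ∀ i ∈ I, 0 ≤ w i)
    (m : ℕ) (B : Fin m → ℝ)
    (wt pt : ι → ℝ) (Bt : Fin m → ℝ)
    (hwt : ∀ i ∈ I, ε ≤ p i → ∃ v : ℤ, wt i = ε ^ 2 * (1 + ε ^ 2) ^ v ∧
        w i ≤ ε ^ 2 * (1 + ε ^ 2) ^ v ∧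
        ∀ v' : ℤ, w i ≤ ε ^ 2 * (1 + ε ^ 2) ^ v' → v ≤ v')
    (hpt : ∀ i ∈ I, ε ≤ p i → ∃ u : ℤ, pt i = ε * (1 + ε) ^ u ∧
        ε * (1 + ε) ^ u ≤ p i ∧
        ∀ u' : ℤ, ε * (1 + ε) ^ u' ≤ p i → u' ≤ u)
    (hwt' : ∀ i ∈ I, p i < ε → wt i = w i)
    (hpt' : ∀ i ∈ I, p i < ε → pt i = p i)
    (hBt : ∀ j, ∃ t : ℤ, Bt j = (1 + ε) ^ (t + 1) ∧ B j ≤ (1 + ε) ^ t ∧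
        ∀ t' : ℤ, B j ≤ (1 + ε) ^ t' → t ≤ t')
    (A : Fin m → Finset ι)
    (hsub : ∀ j, A j ⊆ I)
    (hcap : ∀ j, ∑ i ∈ A j, w i ≤ B j)
    (hprof : ∀ j, 1 ≤ ∑ i ∈ A j, p i) :
    ∀ j, (∑ i ∈ A j, wt i ≤ Bt j) ∧ (1 - ε ≤ ∑ i ∈ A j, pt i) := by
  intro j
  obtain ⟨t, hBt_eq, hB_le, -⟩ := hBt j
  have hwt_le : ∀ i ∈ A j, wt i ≤ (1 + ε ^ 2) * w i := fun i hi =>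
    have hiI := hsub j hi
    rounded_weight_le (hw i hiI) (hwt i hiI) (hwt' i hiI)
  have hp_le : ∀ i ∈ A j, p i ≤ (1 + ε) * pt i := fun i hi =>
    have hiI := hsub j hi
    profit_le_rounded hε0.le (hp i hiI) (hpt i hiI) (hpt' i hiI)
  constructor
  · calc ∑ i ∈ A j, wt i ≤ (1 + ε ^ 2) * ∑ i ∈ A j, w i := by
          rw [mul_sum]; exact sum_le_sum hwt_le
      _ ≤ (1 + ε ^ 2) * B j := mul_le_mul_of_nonneg_left (hcap j) (by positivity)
      _ ≤ Bt j := hBt_eq ▸ mul_le_zpow_add_one (by positivity) (by nlinarith) (by linarith) hB_le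
  · have hscaled : 1 ≤ (1 + ε) * ∑ i ∈ A j, pt i :=
      calc (1 : ℝ) ≤ ∑ i ∈ A j, p i := hprof j
        _ ≤ ∑ i ∈ A j, (1 + ε) * pt i := sum_le_sum hp_le
        _ = (1 + ε) * ∑ i ∈ A j, pt i := by rw [mul_sum]
    nlinarith

/-- Lemma 5.3: rounding item weights up to the grid `ε²·(1+ε²)^ℤ` (for expensive
items), item profits down to the grid `ε·(1+ε)^ℤ` (for expensive items), and
knapsack capacities up to `(1+ε)^{t+1}`, preserves feasibility of a solution of
value at least 1 (with at most `1/ε` expensive items per knapsack) and loses at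
most an `ε`-fraction of each knapsack's profit. -/
theorem stmt10 {ι : Type*} (ε : ℝ) (hε0 : 0 < ε) (hε2 : ε ≤ 1/2)
    (hinv : ∃ k : ℕ, 0 < k ∧ ε = 1 / (k : ℝ))
    (I : Finset ι) (p w : ι → ℝ)
    (hp : ∀ i ∈ I, 0 ≤ p i) (hw : ∀ i ∈ I, 0 ≤ w i)
    (hexpw : ∀ i ∈ I, ε ≤ p i → 0 < w i)
    (m : ℕ) (B : Fin m → ℝ) (hB : ∀ j, 0 < B j)
    (wt pt : ι → ℝ) (Bt : Fin m → ℝ)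
    (hwt : ∀ i ∈ I, ε ≤ p i → ∃ v : ℤ, wt i = ε ^ 2 * (1 + ε ^ 2) ^ v ∧
        w i ≤ ε ^ 2 * (1 + ε ^ 2) ^ v ∧
        ∀ v' : ℤ, w i ≤ ε ^ 2 * (1 + ε ^ 2) ^ v' → v ≤ v')
    (hpt : ∀ i ∈ I, ε ≤ p i → ∃ u : ℤ, pt i = ε * (1 + ε) ^ u ∧
        ε * (1 + ε) ^ u ≤ p i ∧
        ∀ u' : ℤ, ε * (1 + ε) ^ u' ≤ p i → u' ≤ u)
    (hwt' : ∀ i ∈ I, p i < ε → wt i = w i)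
    (hpt' : ∀ i ∈ I, p i < ε → pt i = p i)
    (hBt : ∀ j, ∃ t : ℤ, Bt j = (1 + ε) ^ (t + 1) ∧ B j ≤ (1 + ε) ^ t ∧
        ∀ t' : ℤ, B j ≤ (1 + ε) ^ t' → t ≤ t')
    (A : Fin m → Finset ι)
    (hsub : ∀ j, A j ⊆ I)
    (hdisj : ∀ j j', j ≠ j' → Disjoint (A j) (A j'))
    (hcap : ∀ j, ∑ i ∈ A j, w i ≤ B j)
    (hprof : ∀ j, 1 ≤ ∑ i ∈ A j, p i)
    (hcount : ∀ j, (((A j).filter (fun i => ε ≤ p i)).card : ℝ) ≤ 1 / ε) :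
    ∀ j, (∑ i ∈ A j, wt i ≤ Bt j) ∧ (1 - ε ≤ ∑ i ∈ A j, pt i) :=
  stmt10_general ε hε0 hε2 I p w hp hw m B wt pt Bt hwt hpt hwt' hpt' hBt A hsub hcap hprof
end

section
/- Let N and M be positive integers and let c_1, …, c_N be nonnegative reals with Σ_{i=1}^N c_i = M. Then there exists a matrix (x_{ij}) with 0 ≤ x_{ij} ≤ 1 for all i ∈ {1,…,N}, j ∈ {1,…,M}, such that Σ_{i=1}^N x_{ij} = 1 for every j, Σ_{j=1}^M x_{ij} = c_i for every i, and the number of indices j for which some entry x_{ij} lies strictly between 0 and 1 is at most N − 1. -/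
open Finset

/-!
Lay the masses `c i` end to end on `[0, M]`: configuration `i` occupies `[S i, S (i + 1)]`, where
`S` is the sequence of prefix sums, and knapsack `j` is the unit interval `[j, j + 1]`. Let `x i j`
be the length of the overlap of the two intervals. Both row and column sums telescope, and a
knapsack whose interval meets some configuration in a length strictly between `0` and `1` contains
an interior cut point `S k`, `0 < k < N`, in its open interior; distinct knapsacks have disjoint
interiors, so there are at most `N - 1` of them.
-/

/-- The length of `[a, b] ∩ [p, q]`. -/
def intervalOverlap (a b p q : ℝ) : ℝ := max 0 (min b q - max a p)

lemma intervalOverlap_comm (a b p q : ℝ) : intervalOverlap a b p q = intervalOverlap p q a b := by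
  rw [intervalOverlap, intervalOverlap, min_comm, max_comm a]

lemma intervalOverlap_le {p q : ℝ} (hpq : p ≤ q) (a b : ℝ) : intervalOverlap a b p q ≤ q - p :=
  max_le (by linarith) (by linarith [min_le_right b q, le_max_right a p])

/-- The overlap is the increment of the clamping map `t ↦ max p (min q t)` onto `[p, q]`. -/
lemma intervalOverlap_eq_sub {a b p q : ℝ} (hab : a ≤ b) (hpq : p ≤ q) :
    intervalOverlap a b p q = max p (min q b) - max p (min q a) := by
  simp only [intervalOverlap, max_def, min_def]
  split_ifs <;> linarith

lemma sum_range_intervalOverlap {s : ℕ → ℝ} (hs : Monotone s) {p q : ℝ} (hpq : p ≤ q) (n : ℕ) :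
    ∑ k ∈ range n, intervalOverlap (s k) (s (k + 1)) p q
      = max p (min q (s n)) - max p (min q (s 0)) := by
  rw [sum_congr rfl fun k _ => intervalOverlap_eq_sub (hs k.le_succ) hpq]
  exact sum_range_sub (fun k => max p (min q (s k))) n

lemma sum_range_intervalOverlap_of_le {s : ℕ → ℝ} (hs : Monotone s) {p q : ℝ} {n : ℕ}
    (h0 : s 0 ≤ p) (hpq : p ≤ q) (hn : q ≤ s n) :
    ∑ k ∈ range n, intervalOverlap (s k) (s (k + 1)) p q = q - p := by
  rw [sum_range_intervalOverlap hs hpq, min_eq_left hn, max_eq_right hpq,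
    min_eq_right (h0.trans hpq), max_eq_left h0]

lemma mem_Ioo_of_intervalOverlap {a b p q : ℝ} (hpos : 0 < intervalOverlap a b p q)
    (hlt : intervalOverlap a b p q < q - p) : a ∈ Set.Ioo p q ∨ b ∈ Set.Ioo p q := by
  simp only [intervalOverlap, lt_max_iff, lt_self_iff_false, false_or, max_lt_iff] at hpos hlt
  simp only [sub_pos, lt_min_iff, max_lt_iff] at hpos
  by_contra! h
  simp only [Set.mem_Ioo, not_and, not_lt] at h
  have hap : a ≤ p := not_lt.1 fun hpa => (h.1 hpa).not_gt hpos.2.1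
  have hqb : q ≤ b := h.2 hpos.1.2
  rw [max_eq_right hap, min_eq_right hqb] at hlt
  exact lt_irrefl _ hlt.2

def prefixSum {N : ℕ} (c : Fin N → ℝ) (k : ℕ) : ℝ :=
  ∑ i ∈ univ.filter (fun i : Fin N => (i : ℕ) < k), c i

lemma prefixSum_zero {N : ℕ} (c : Fin N → ℝ) : prefixSum c 0 = 0 := by
  simp [prefixSum]

lemma prefixSum_of_le {N : ℕ} (c : Fin N → ℝ) {k : ℕ} (hk : N ≤ k) : prefixSum c k = ∑ i, c i := by
  rw [prefixSum, filter_true_of_mem fun i _ => i.is_lt.trans_le hk]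

lemma prefixSum_succ {N : ℕ} (c : Fin N → ℝ) (i : Fin N) :
    prefixSum c (i + 1) = prefixSum c i + c i := by
  have : univ.filter (fun j : Fin N => (j : ℕ) < i + 1)
      = insert i (univ.filter fun j : Fin N => (j : ℕ) < i) := by
    ext j; simp [le_iff_eq_or_lt, Fin.val_inj]
  rw [prefixSum, this, sum_insert (by simp), add_comm]; rfl

lemma monotone_prefixSum {N : ℕ} {c : Fin N → ℝ} (hc : ∀ i, 0 ≤ c i) : Monotone (prefixSum c) :=
  fun _ _ hkl => sum_le_sum_of_subset_of_nonneg
    (monotone_filter_right _ fun _ _ h => h.trans_le hkl) fun i _ _ => hc i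

lemma exists_mem_Ioo_of_intervalOverlap {s : ℕ → ℝ} {N i : ℕ} {p : ℝ} (hi : i < N)
    (h0 : s 0 ≤ p) (hN : p + 1 ≤ s N) (hpos : 0 < intervalOverlap (s i) (s (i + 1)) p (p + 1))
    (hlt : intervalOverlap (s i) (s (i + 1)) p (p + 1) < 1) :
    ∃ k ∈ Ioo 0 N, s k ∈ Set.Ioo p (p + 1) := by
  rcases mem_Ioo_of_intervalOverlap hpos (by rwa [add_sub_cancel_left]) with h | h
  · refine ⟨i, mem_Ioo.2 ⟨Nat.pos_of_ne_zero ?_, hi⟩, h⟩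
    rintro rfl
    exact h0.not_gt h.1
  · refine ⟨i + 1, mem_Ioo.2 ⟨i.succ_pos, Nat.lt_of_le_of_ne hi ?_⟩, h⟩
    rintro rfl
    exact hN.not_gt h.2

/-- A fractional knapsack `j` contains a cut point `s k`, `0 < k < N`, and determines it by
`⌊s k⌋₊ = j`. -/
lemma card_filter_fractional_le {s : ℕ → ℝ} {N M : ℕ} (h0 : s 0 ≤ 0) (hN : M ≤ s N) :
    (univ.filter fun j : Fin M => ∃ i : Fin N,
      0 < intervalOverlap (s i) (s (i + 1)) j (j + 1) ∧
        intervalOverlap (s i) (s (i + 1)) j (j + 1) < 1).card ≤ N - 1 := by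
  calc _ = (image Fin.val _).card := (card_image_of_injective _ Fin.val_injective).symm
    _ ≤ ((Ioo 0 N).image fun k => ⌊s k⌋₊).card := card_le_card ?_
    _ ≤ (Ioo 0 N).card := card_image_le
    _ = N - 1 := by simp
  intro _ hmem
  obtain ⟨j, hj, rfl⟩ := mem_image.1 hmem
  obtain ⟨i, hpos, hlt⟩ := (mem_filter.1 hj).2
  obtain ⟨k, hk, hsk⟩ := exists_mem_Ioo_of_intervalOverlap i.is_lt
    (h0.trans j.val.cast_nonneg) (hN.trans' (by exact_mod_cast j.is_lt)) hpos hlt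
  exact mem_image.2 ⟨k, hk, Nat.floor_eq_on_Ico _ _ (Set.Ioo_subset_Ico_self hsk)⟩

theorem stmt13_general (N M : ℕ)
    (c : Fin N → ℝ) (hc : ∀ i, 0 ≤ c i) (hsum : ∑ i, c i = (M : ℝ)) :
    ∃ x : Fin N → Fin M → ℝ,
      (∀ i j, 0 ≤ x i j ∧ x i j ≤ 1) ∧
      (∀ j, ∑ i, x i j = 1) ∧
      (∀ i, ∑ j, x i j = c i) ∧
      (Finset.univ.filter
        (fun j : Fin M => ∃ i, 0 < x i j ∧ x i j < 1)).card ≤ N - 1 := by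
  set S := prefixSum c
  have hS : Monotone S := monotone_prefixSum hc
  have hS0 : S 0 = 0 := prefixSum_zero c
  have hSN : S N = M := (prefixSum_of_le c le_rfl).trans hsum
  refine ⟨fun i j => intervalOverlap (S i) (S (i + 1)) j (j + 1), fun i j => ⟨le_max_left _ _, ?_⟩,
    fun j => ?_, fun i => ?_, card_filter_fractional_le hS0.le hSN.ge⟩
  · simpa using intervalOverlap_le (le_add_of_nonneg_right zero_le_one) (S i) (S (i + 1))
  · have hjM : (j : ℝ) + 1 ≤ S N := hSN ▸ by exact_mod_cast j.is_lt
    rw [Fin.sum_univ_eq_sum_range (fun i => intervalOverlap (S i) (S (i + 1)) j (j + 1)),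
      sum_range_intervalOverlap_of_le hS (hS0.trans_le j.val.cast_nonneg) (by linarith) hjM]
    ring
  · have h := sum_range_intervalOverlap_of_le (s := Nat.cast) (n := M) Nat.mono_cast
      (by simpa [hS0] using hS i.val.zero_le) (hS (i.val.le_add_right 1)) (hSN ▸ hS i.is_lt)
    push_cast at h
    simp_rw [intervalOverlap_comm (S _)]
    rw [Fin.sum_univ_eq_sum_range (fun j : ℕ => intervalOverlap j (j + 1) (S i) (S (i + 1))), h]
    exact sub_eq_of_eq_add' (prefixSum_succ c i)

/-- The transportation step in the proof of Lemma 5.8: nonnegative configuration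
multiplicities `c i` summing to the number `M` of knapsacks can be distributed so
that every knapsack receives total configuration mass exactly 1, each configuration
`i` is used exactly `c i` times in total, and at most `N - 1` knapsacks receive a
fractional amount of some configuration. -/
theorem stmt13 (N M : ℕ) (hN : 0 < N) (hM : 0 < M)
    (c : Fin N → ℝ) (hc : ∀ i, 0 ≤ c i) (hsum : ∑ i, c i = (M : ℝ)) :
    ∃ x : Fin N → Fin M → ℝ,
      (∀ i j, 0 ≤ x i j ∧ x i j ≤ 1) ∧
      (∀ j, ∑ i, x i j = 1) ∧
      (∀ i, ∑ j, x i j = c i) ∧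
      (Finset.univ.filter
        (fun j : Fin M => ∃ i, 0 < x i j ∧ x i j < 1)).card ≤ N - 1 :=
  stmt13_general N M c hc hsum
end
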